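/- arXiv:1501.05160 — 4 statements merged into one kernel-verified Lean document; each statement's English description precedes it below -/
import Mathlib

section
/- If Φ_k(z) = ∏_{j=1}^k (z - z_j) is the k-th monic Szegő polynomial with Verblunsky coefficients α_0,...,α_{k-1} in the open unit disk, then ∏_{j=0}^{k-1} (1 - |α_j|^2)^{j+1} = ∏_{j,s=1}^k (1 - z_j conj(z_s)). -/
open Polynomial

/-- The monic Szegő polynomials: `Φ_0 = 1`,
`Φ_{j+1}(z) = z Φ_j(z) - conj(α_j) Φ_j^*(z)`. -/
noncomputable def szego (α : ℕ → ℂ) : ℕ → Polynomial ℂ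
  | 0 => 1
  | k + 1 =>
      Polynomial.X * szego α k -
        Polynomial.C ((starRingEnd ℂ) (α k)) *
          Polynomial.reflect k ((szego α k).map (starRingEnd ℂ))

private lemma my_natDegree_reflect_le {f : ℂ[X]} {N : ℕ} (h : f.natDegree ≤ N) :
    (reflect N f).natDegree ≤ N := by
  rw [natDegree_le_iff_coeff_eq_zero] at *
  intro i hi
  rw [coeff_reflect, revAt_eq_self_of_lt hi]
  exact h i hi

private lemma szego_monic_deg (α : ℕ → ℂ) (k : ℕ) :
    (szego α k).Monic ∧ (szego α k).natDegree = k := by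
  induction k with
  | zero => exact ⟨monic_one, natDegree_one⟩
  | succ k ih =>
    obtain ⟨hm, hd⟩ := ih
    have h1 : (X * szego α k).Monic := monic_X.mul hm
    have hd1 : (X * szego α k).natDegree = k + 1 := by
      rw [natDegree_mul X_ne_zero hm.ne_zero, natDegree_X, hd]; omega
    have hmap : ((szego α k).map (starRingEnd ℂ)).natDegree ≤ k :=
      le_trans natDegree_map_le hd.le
    have h2 : (C ((starRingEnd ℂ) (α k)) *
        reflect k ((szego α k).map (starRingEnd ℂ))).natDegree < k + 1 :=
      lt_of_le_of_lt (le_trans (natDegree_C_mul_le _ _) (my_natDegree_reflect_le hmap))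
        (Nat.lt_succ_self k)
    rw [← hd1] at h2
    constructor
    · show (X * szego α k - _).Monic
      exact h1.sub_of_left (degree_lt_degree h2)
    · show (X * szego α k - _).natDegree = k + 1
      rw [natDegree_sub_eq_left_of_natDegree_lt h2, hd1]

private lemma my_map_conj_conj (p : ℂ[X]) :
    (p.map (starRingEnd ℂ)).map (starRingEnd ℂ) = p := by
  ext i; simp

private lemma my_reflect_sub (f g : ℂ[X]) (N : ℕ) :
    reflect N (f - g) = reflect N f - reflect N g := by
  ext i; simp [coeff_reflect]

private lemma my_reflect_reflect (p : ℂ[X]) (k : ℕ) (h : p.natDegree ≤ k) :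
    reflect (k + 1) (reflect k p) = X * p := by
  ext i
  rw [coeff_reflect, coeff_reflect]
  match i with
  | 0 =>
    rw [revAt_zero, revAt_eq_self_of_lt (Nat.lt_succ_self k), mul_coeff_zero, coeff_X_zero,
      zero_mul, coeff_eq_zero_of_natDegree_lt (lt_of_le_of_lt h (Nat.lt_succ_self k))]
  | (n + 1) =>
    rw [coeff_X_mul]
    by_cases hn : n ≤ k
    · have e1 : revAt (k + 1) (n + 1) = k - n := by
        rw [revAt_le (by omega)]; omega
      have e2 : revAt k (k - n) = n := by
        rw [revAt_le (by omega)]; omega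
      rw [e1, e2]
    · rw [show revAt (k + 1) (n + 1) = n + 1 from revAt_eq_self_of_lt (by omega),
        show revAt k (n + 1) = n + 1 from revAt_eq_self_of_lt (by omega),
        coeff_eq_zero_of_natDegree_lt (by omega), coeff_eq_zero_of_natDegree_lt (by omega)]

private lemma my_reflect_linear (a : ℂ) : reflect 1 (X - C a) = 1 - C a * X := by
  have h : (X - C a : ℂ[X]) = (X : ℂ[X]) ^ 1 - C a * X ^ 0 := by ring
  rw [h, my_reflect_sub, reflect_monomial, reflect_C_mul_X_pow, revAt_le (le_refl 1),
    revAt_le (by omega)]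
  norm_num

private lemma my_reflect_prod {ι : Type*} [DecidableEq ι] (s : Finset ι) (a : ι → ℂ) :
    reflect s.card (∏ j ∈ s, (X - C (a j))) = ∏ j ∈ s, (1 - C (a j) * X) := by
  induction s using Finset.induction with
  | empty => simp
  | @insert i s hi ih =>
    have hb : (∏ x ∈ s, (X - C (a x))).natDegree ≤ s.card := by
      refine le_trans (natDegree_prod_le _ _) ?_
      simp [natDegree_X_sub_C]
    rw [Finset.prod_insert hi, Finset.prod_insert hi, Finset.card_insert_of_notMem hi,
      show s.card + 1 = 1 + s.card from by omega,
      reflect_mul (F := 1) (G := s.card) _ _ (natDegree_X_sub_C _).le hb,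
      my_reflect_linear, ih]

private lemma szego_star_rec (α : ℕ → ℂ) (k : ℕ) :
    reflect (k + 1) ((szego α (k + 1)).map (starRingEnd ℂ)) =
      reflect k ((szego α k).map (starRingEnd ℂ)) - C (α k) * (X * szego α k) := by
  have hd : (szego α k).natDegree ≤ k := (szego_monic_deg α k).2.le
  have hdm : ((szego α k).map (starRingEnd ℂ)).natDegree ≤ k :=
    le_trans natDegree_map_le hd
  have h1 : (szego α (k + 1)).map (starRingEnd ℂ) =
      X * (szego α k).map (starRingEnd ℂ) -
        C (α k) * reflect k (szego α k) := by
    show (X * szego α k - _).map _ = _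
    rw [Polynomial.map_sub, Polynomial.map_mul, Polynomial.map_mul, map_X, map_C,
      starRingEnd_self_apply, ← reflect_map, my_map_conj_conj]
  rw [h1, my_reflect_sub, reflect_C_mul,
    show k + 1 = 1 + k from by omega,
    reflect_mul (F := 1) (G := k) _ _ natDegree_X.le hdm, reflect_one_X, one_mul,
    show 1 + k = k + 1 from by omega,
    my_reflect_reflect _ _ hd]

private theorem szego_key (α : ℕ → ℂ) : ∀ (k : ℕ) (z : Fin k → ℂ),
    szego α k = ∏ j, (Polynomial.X - Polynomial.C (z j)) →
    ∏ j ∈ Finset.range k, (((1 - ‖α j‖ ^ 2 : ℝ) : ℂ)) ^ (j + 1) =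
      ∏ j, ∏ s, (1 - z j * (starRingEnd ℂ) (z s)) := by
  intro k
  induction k with
  | zero => intro z hΦ; simp
  | succ k ih =>
    intro z hΦ
    obtain ⟨hm, hd⟩ := szego_monic_deg α k
    have hcard : (szego α k).roots.card = k := by
      exact (splits_iff_card_roots.mp (IsAlgClosed.splits (szego α k))).trans hd
    set l := (szego α k).roots.toList with hl_def
    have hl : l.length = k := by rw [hl_def, Multiset.length_toList, hcard]
    set y : Fin k → ℂ := fun j => l.get (Fin.cast hl.symm j) with hy
    have hprod : ∀ f : ℂ → ℂ[X], ((szego α k).roots.map f).prod = ∏ j, f (y j) := by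
      intro f
      have h1 : (szego α k).roots = (l : Multiset ℂ) := ((szego α k).roots.coe_toList).symm
      rw [h1]
      simp only [Multiset.map_coe, Multiset.prod_coe]
      conv_lhs => rw [← List.ofFn_get l, List.map_ofFn, List.prod_ofFn]
      exact Fintype.prod_equiv (finCongr hl) _ _ (fun i => rfl)
    have hΦk : szego α k = ∏ j, (X - C (y j)) := by
      conv_lhs => rw [← prod_multiset_X_sub_C_of_monic_of_roots_card_eq hm
        (hcard.trans hd.symm)]
      exact hprod _
    set A := reflect k ((szego α k).map (starRingEnd ℂ)) with hA_def
    set B := reflect (k + 1) ((szego α (k + 1)).map (starRingEnd ℂ)) with hB_def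
    have hA : A = ∏ s, (1 - C ((starRingEnd ℂ) (y s)) * X) := by
      rw [hA_def, hΦk, Polynomial.map_prod]
      simp only [Polynomial.map_sub, map_X, map_C]
      have h := my_reflect_prod (Finset.univ : Finset (Fin k))
        (fun j => (starRingEnd ℂ) (y j))
      simpa using h
    have hB : B = ∏ s, (1 - C ((starRingEnd ℂ) (z s)) * X) := by
      rw [hB_def, hΦ, Polynomial.map_prod]
      simp only [Polynomial.map_sub, map_X, map_C]
      have h := my_reflect_prod (Finset.univ : Finset (Fin (k + 1)))
        (fun j => (starRingEnd ℂ) (z j))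
      simpa using h
    have hAeval : ∀ w, A.eval w = ∏ s, (1 - (starRingEnd ℂ) (y s) * w) := by
      intro w
      rw [hA, eval_prod]
      exact Finset.prod_congr rfl fun s _ => by simp
    have hBeval : ∀ w, B.eval w = ∏ s, (1 - (starRingEnd ℂ) (z s) * w) := by
      intro w
      rw [hB, eval_prod]
      exact Finset.prod_congr rfl fun s _ => by simp
    have hR2 : B = A - C (α k) * (X * szego α k) := szego_star_rec α k
    have hrooty : ∀ s, (szego α k).eval (y s) = 0 := by
      intro s
      rw [hΦk, eval_prod]
      exact Finset.prod_eq_zero (Finset.mem_univ s) (by simp)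
    have hrootz : ∀ j, (szego α (k + 1)).eval (z j) = 0 := by
      intro j
      rw [hΦ, eval_prod]
      exact Finset.prod_eq_zero (Finset.mem_univ j) (by simp)
    have hR1 : ∀ w, (szego α (k + 1)).eval w
        = w * (szego α k).eval w - (starRingEnd ℂ) (α k) * A.eval w := by
      intro w
      show (X * szego α k - _).eval w = _
      rw [← hA_def]
      simp only [eval_sub, eval_mul, eval_X, eval_C]
    have hBz : ∀ j, B.eval (z j)
        = (1 - α k * (starRingEnd ℂ) (α k)) * A.eval (z j) := by
      intro j
      have h0 := hrootz j
      rw [hR1] at h0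
      have h1 : z j * (szego α k).eval (z j)
          = (starRingEnd ℂ) (α k) * A.eval (z j) := by linear_combination h0
      rw [hR2]
      simp only [eval_sub, eval_mul, eval_C, eval_X]
      rw [h1]; ring
    have hBy : ∀ s, B.eval (y s) = A.eval (y s) := by
      intro s
      rw [hR2]
      simp [hrooty s]
    have hIH := ih y hΦk
    have e1 : ∏ j, ∏ s, (1 - z j * (starRingEnd ℂ) (z s)) = ∏ j, B.eval (z j) := by
      refine Finset.prod_congr rfl fun j _ => ?_
      rw [hBeval]
      exact Finset.prod_congr rfl fun s _ => by ring
    have e2 : ∏ j, B.eval (z j)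
        = (1 - α k * (starRingEnd ℂ) (α k)) ^ (k + 1) * ∏ j, A.eval (z j) := by
      rw [Finset.prod_congr rfl fun j _ => hBz j, Finset.prod_mul_distrib,
        Finset.prod_const, Finset.card_univ, Fintype.card_fin]
    have e3 : ∏ j, A.eval (z j) = (starRingEnd ℂ) (∏ s, B.eval (y s)) := by
      rw [map_prod]
      calc ∏ j, A.eval (z j) = ∏ j, ∏ s, (1 - (starRingEnd ℂ) (y s) * z j) :=
            Finset.prod_congr rfl fun j _ => hAeval (z j)
        _ = ∏ s, ∏ j, (1 - (starRingEnd ℂ) (y s) * z j) := Finset.prod_comm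
        _ = ∏ s, (starRingEnd ℂ) (B.eval (y s)) := by
            refine Finset.prod_congr rfl fun s _ => ?_
            rw [hBeval, map_prod]
            refine Finset.prod_congr rfl fun j _ => ?_
            simp only [map_sub, map_mul, map_one, Complex.conj_conj]
            ring
    have e4 : ∏ s, B.eval (y s) = ∏ s, ∏ t, (1 - y s * (starRingEnd ℂ) (y t)) := by
      refine Finset.prod_congr rfl fun s _ => ?_
      rw [hBy, hAeval]
      exact Finset.prod_congr rfl fun t _ => by ring
    have hreal : (starRingEnd ℂ)
        (∏ j ∈ Finset.range k, (((1 - ‖α j‖ ^ 2 : ℝ) : ℂ)) ^ (j + 1))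
        = ∏ j ∈ Finset.range k, (((1 - ‖α j‖ ^ 2 : ℝ) : ℂ)) ^ (j + 1) := by
      rw [map_prod]
      exact Finset.prod_congr rfl fun j _ => by rw [map_pow, Complex.conj_ofReal]
    have hc : ((1 - ‖α k‖ ^ 2 : ℝ) : ℂ)
        = 1 - α k * (starRingEnd ℂ) (α k) := by
      rw [Complex.mul_conj, Complex.normSq_eq_norm_sq]
      push_cast
      ring
    rw [e1, e2, e3, e4, ← hIH, hreal, Finset.prod_range_succ, hc]
    ring

/-- if `Φ_k(z) = ∏ (z - z_j)` with Verblunsky coefficients in the open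
unit disk, then `∏_{j=0}^{k-1} (1-|α_j|²)^{j+1} = ∏_{j,s=1}^k (1 - z_j conj(z_s))`. -/
theorem szego_zeros_verblunsky_product (k : ℕ) (α : ℕ → ℂ)
    (hα : ∀ j, j < k → ‖α j‖ < 1) (z : Fin k → ℂ)
    (hΦ : szego α k = ∏ j, (Polynomial.X - Polynomial.C (z j))) :
    ∏ j ∈ Finset.range k, (((1 - ‖α j‖ ^ 2 : ℝ) : ℂ)) ^ (j + 1) =
      ∏ j, ∏ s, (1 - z j * (starRingEnd ℂ) (z s)) := by
  exact szego_key α k z hΦ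
end

section
/- Let μ = ∑_{j=1}^n μ_j δ_{e^{iθ_j}} be a probability measure on the unit circle supported on n distinct points with positive weights μ_j summing to 1, and let α_0,...,α_{n-2} ∈ 𝔻 be its Verblunsky coefficients. Then ∏_{j=0}^{n-2} (1 - |α_j|^2)^{n-j-1} = |Δ(e^{iθ_1},...,e^{iθ_n})|^2 ∏_{j=1}^n μ_j, where Δ denotes the Vandermonde product ∏_{j<k}(e^{iθ_k} - e^{iθ_j}). -/
open Polynomial Finset

lemma szego_zero (α : ℕ → ℂ) : szego α 0 = 1 := rfl

lemma szego_def (α : ℕ → ℂ) (k : ℕ) : szego α (k+1) = Polynomial.X * szego α k -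
        Polynomial.C ((starRingEnd ℂ) (α k)) *
          Polynomial.reflect k ((szego α k).map (starRingEnd ℂ)) := rfl

lemma natDegree_reflect_le' {p : Polynomial ℂ} {N : ℕ} (h : p.natDegree ≤ N) :
    (reflect N p).natDegree ≤ N := by
  apply natDegree_le_iff_coeff_eq_zero.2
  intro i hi
  rw [coeff_reflect, revAt_eq_self_of_lt hi]
  exact coeff_eq_zero_of_natDegree_lt (lt_of_le_of_lt h hi)

lemma szego_natDegree_le (α : ℕ → ℂ) (j : ℕ) : (szego α j).natDegree ≤ j := by
  induction j with
  | zero => simp [szego]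
  | succ k ih =>
    rw [szego]
    refine le_trans (natDegree_sub_le _ _) (max_le ?_ ?_)
    · exact le_trans (natDegree_mul_le) (by have := natDegree_X_le (R := ℂ); omega)
    · refine le_trans (natDegree_mul_le) ?_
      simp only [natDegree_C, zero_add]
      exact le_trans (natDegree_reflect_le' (by simpa using ih)) (by omega)

lemma szego_coeff_self (α : ℕ → ℂ) (j : ℕ) : (szego α j).coeff j = 1 := by
  induction j with
  | zero => simp [szego]
  | succ k ih =>
    rw [szego, coeff_sub, coeff_X_mul, ih, coeff_C_mul,
      coeff_eq_zero_of_natDegree_lt (lt_of_le_of_lt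
        (natDegree_reflect_le' (by simpa using szego_natDegree_le α k)) (Nat.lt_succ_self k))]
    ring

lemma szego_natDegree (α : ℕ → ℂ) (j : ℕ) : (szego α j).natDegree = j :=
  le_antisymm (szego_natDegree_le α j)
    (le_natDegree_of_ne_zero (by rw [szego_coeff_self]; exact one_ne_zero))

lemma szego_monic (α : ℕ → ℂ) (j : ℕ) : (szego α j).Monic := by
  rw [Polynomial.Monic, Polynomial.leadingCoeff, szego_natDegree, szego_coeff_self]

lemma szego_degree (α : ℕ → ℂ) (j : ℕ) : (szego α j).degree = j := by
  rw [Polynomial.degree_eq_natDegree (szego_monic α j).ne_zero, szego_natDegree]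

lemma reflect_conj_eval (p : Polynomial ℂ) (N : ℕ) (hp : p.natDegree ≤ N) (v : ℂ)
    (hv : norm v = 1) :
    (Polynomial.reflect N (p.map (starRingEnd ℂ))).eval v
      = v ^ N * (starRingEnd ℂ) (p.eval v) := by
  have hv0 : v ≠ 0 := by intro h; simp [h] at hv
  have hvc : v⁻¹ = (starRingEnd ℂ) v := by
    rw [Complex.inv_def, Complex.normSq_eq_norm_sq, hv]
    simp
  letI : Invertible (v⁻¹) := invertibleOfNonzero (inv_ne_zero hv0)
  have h := Polynomial.eval₂_reflect_mul_pow (RingHom.id ℂ) (v⁻¹) N (p.map (starRingEnd ℂ))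
    (le_trans natDegree_map_le hp)
  have hinv : (⅟(v⁻¹) : ℂ) = v := by rw [invOf_eq_inv _, inv_inv]
  rw [hinv] at h
  replace h : (reflect N (p.map (starRingEnd ℂ))).eval v * v⁻¹ ^ N
      = (p.map (starRingEnd ℂ)).eval v⁻¹ := h
  have h2 : (p.map (starRingEnd ℂ)).eval (v⁻¹) = (starRingEnd ℂ) (p.eval v) := by
    rw [hvc, Polynomial.eval_map, Polynomial.eval₂_at_apply]
  rw [h2] at h
  field_simp at h
  rw [← h, one_div, inv_pow, mul_left_comm, mul_inv_cancel₀ (pow_ne_zero N hv0), mul_one]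

noncomputable def ip {n : ℕ} (μ : Fin n → ℝ) (v : Fin n → ℂ) (f g : Polynomial ℂ) : ℂ :=
  ∑ l, (μ l : ℂ) * (starRingEnd ℂ) (f.eval (v l)) * g.eval (v l)

lemma ip_conj {n : ℕ} (μ : Fin n → ℝ) (v : Fin n → ℂ) (f g : Polynomial ℂ) :
    (starRingEnd ℂ) (ip μ v f g) = ip μ v g f := by
  simp only [ip, map_sum, map_mul, Complex.conj_conj, Complex.conj_ofReal]
  refine Finset.sum_congr rfl fun l _ => by ring

lemma ip_add_right {n : ℕ} (μ : Fin n → ℝ) (v : Fin n → ℂ) (f g h : Polynomial ℂ) :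
    ip μ v f (g + h) = ip μ v f g + ip μ v f h := by
  simp only [ip, eval_add, mul_add, Finset.sum_add_distrib]

lemma ip_sub_right {n : ℕ} (μ : Fin n → ℝ) (v : Fin n → ℂ) (f g h : Polynomial ℂ) :
    ip μ v f (g - h) = ip μ v f g - ip μ v f h := by
  simp only [ip, eval_sub, mul_sub, Finset.sum_sub_distrib]

lemma ip_sub_left {n : ℕ} (μ : Fin n → ℝ) (v : Fin n → ℂ) (f g h : Polynomial ℂ) :
    ip μ v (f - g) h = ip μ v f h - ip μ v g h := by
  simp only [ip, eval_sub, map_sub, sub_mul, mul_sub, Finset.sum_sub_distrib]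

lemma ip_C_mul_right {n : ℕ} (μ : Fin n → ℝ) (v : Fin n → ℂ) (c : ℂ) (f g : Polynomial ℂ) :
    ip μ v f (Polynomial.C c * g) = c * ip μ v f g := by
  simp only [ip, eval_mul, eval_C, Finset.mul_sum]
  refine Finset.sum_congr rfl fun l _ => by ring

lemma ip_C_mul_left {n : ℕ} (μ : Fin n → ℝ) (v : Fin n → ℂ) (c : ℂ) (f g : Polynomial ℂ) :
    ip μ v (Polynomial.C c * f) g = (starRingEnd ℂ) c * ip μ v f g := by
  simp only [ip, eval_mul, eval_C, map_mul, Finset.mul_sum]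
  refine Finset.sum_congr rfl fun l _ => by ring

lemma ip_zero_right {n : ℕ} (μ : Fin n → ℝ) (v : Fin n → ℂ) (f : Polynomial ℂ) :
    ip μ v f 0 = 0 := by simp [ip]

lemma ip_expand_right {n : ℕ} (μ : Fin n → ℝ) (v : Fin n → ℂ) (f g : Polynomial ℂ)
    (N : ℕ) (hg : g.natDegree < N) :
    ip μ v f g = ∑ m ∈ Finset.range N, g.coeff m * ip μ v f (Polynomial.X ^ m) := by
  simp only [ip, eval_pow, eval_X, Finset.mul_sum]
  rw [Finset.sum_comm]
  refine Finset.sum_congr rfl fun l _ => ?_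
  rw [Polynomial.eval_eq_sum_range' hg, Finset.mul_sum]
  refine Finset.sum_congr rfl fun m _ => by ring

lemma ip_expand_left {n : ℕ} (μ : Fin n → ℝ) (v : Fin n → ℂ) (f g : Polynomial ℂ)
    (N : ℕ) (hf : f.natDegree < N) :
    ip μ v f g = ∑ m ∈ Finset.range N, (starRingEnd ℂ) (f.coeff m) * ip μ v (Polynomial.X ^ m) g := by
  simp only [ip, eval_pow, eval_X, Finset.mul_sum]
  rw [Finset.sum_comm]
  refine Finset.sum_congr rfl fun l _ => ?_
  rw [Polynomial.eval_eq_sum_range' hf, map_sum, Finset.mul_sum, Finset.sum_mul]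
  refine Finset.sum_congr rfl fun m _ => by simp only [map_mul, map_pow]; ring

section
variable {n : ℕ} (μ : Fin n → ℝ) (v : Fin n → ℂ) (α : ℕ → ℂ)

lemma orth_poly (ho : ∀ j, j < n → ∀ m, m < j → ip μ v (szego α j) (Polynomial.X ^ m) = 0)
    (j : ℕ) (hj : j < n) (g : Polynomial ℂ) (hg : g.degree < (j : WithBot ℕ)) :
    ip μ v (szego α j) g = 0 := by
  by_cases hg0 : g = 0
  · rw [hg0]; exact ip_zero_right μ v _
  · rw [ip_expand_right μ v _ g j ((Polynomial.natDegree_lt_iff_degree_lt hg0).2 hg)]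
    refine Finset.sum_eq_zero fun m hm => ?_
    rw [ho j hj m (Finset.mem_range.1 hm), mul_zero]

lemma ip_szego_pow_self (ho : ∀ j, j < n → ∀ m, m < j → ip μ v (szego α j) (Polynomial.X ^ m) = 0)
    (j : ℕ) (hj : j < n) :
    ip μ v (szego α j) (Polynomial.X ^ j) = ip μ v (szego α j) (szego α j) := by
  have hdeg : (Polynomial.X ^ j - szego α j).degree < (j : WithBot ℕ) := by
    have := Polynomial.degree_sub_lt (p := (Polynomial.X : Polynomial ℂ) ^ j) (q := szego α j)
      (by rw [Polynomial.degree_X_pow, szego_degree]) (pow_ne_zero j Polynomial.X_ne_zero)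
      (by rw [Polynomial.leadingCoeff_X_pow, szego_monic α j])
    rwa [Polynomial.degree_X_pow] at this
  have h0 := orth_poly μ v α ho j hj _ hdeg
  rw [ip_sub_right] at h0
  exact sub_eq_zero.1 h0

lemma norm_step (hv : ∀ l, norm (v l) = 1)
    (ho : ∀ j, j < n → ∀ m, m < j → ip μ v (szego α j) (Polynomial.X ^ m) = 0)
    (j : ℕ) (hj : j + 1 < n) :
    ip μ v (szego α (j+1)) (szego α (j+1))
      = (1 - (Complex.normSq (α j) : ℂ)) * ip μ v (szego α j) (szego α j) := by
  set Φ := szego α j with hΦ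
  set R := Polynomial.reflect j (Φ.map (starRingEnd ℂ)) with hRdef
  set c := (starRingEnd ℂ) (α j) with hc
  have hvu : ∀ l, (starRingEnd ℂ) (v l) * v l = 1 := fun l => by
    rw [mul_comm, Complex.mul_conj, Complex.normSq_eq_norm_sq, hv l]; norm_num
  have hvuj : ∀ (m : ℕ) (l : Fin n), (starRingEnd ℂ) (v l) ^ m * v l ^ m = 1 := fun m l => by
    rw [← mul_pow, hvu l, one_pow]
  have hReval : ∀ l, R.eval (v l) = v l ^ j * (starRingEnd ℂ) (Φ.eval (v l)) :=
    fun l => reflect_conj_eval Φ j (szego_natDegree_le α j) (v l) (hv l)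
  have hs : szego α (j+1) = Polynomial.X * Φ - Polynomial.C c * R := szego_def α j
  have h1 : ip μ v (Polynomial.X * Φ) (Polynomial.X * Φ) = ip μ v Φ Φ := by
    unfold ip
    refine Finset.sum_congr rfl fun l _ => ?_
    simp only [eval_mul, eval_X, map_mul]
    linear_combination ((μ l : ℂ) * (starRingEnd ℂ) (Φ.eval (v l)) * Φ.eval (v l)) * hvu l
  have h4 : ip μ v R R = ip μ v Φ Φ := by
    unfold ip
    refine Finset.sum_congr rfl fun l _ => ?_
    rw [hReval l]
    simp only [map_mul, map_pow, Complex.conj_conj]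
    linear_combination ((μ l : ℂ) * (starRingEnd ℂ) (Φ.eval (v l)) * Φ.eval (v l)) * hvuj j l
  have hRm : ∀ m, m ≤ j → ip μ v R (Polynomial.X ^ m)
      = (starRingEnd ℂ) (ip μ v Φ (Polynomial.X ^ (j - m))) := by
    intro m hm
    unfold ip
    rw [map_sum]
    refine Finset.sum_congr rfl fun l _ => ?_
    rw [hReval l]
    simp only [eval_pow, eval_X, map_mul, map_pow, Complex.conj_conj, Complex.conj_ofReal]
    have hj' : (starRingEnd ℂ) (v l) ^ j
        = (starRingEnd ℂ) (v l) ^ (j - m) * (starRingEnd ℂ) (v l) ^ m := by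
      rw [← pow_add]; congr 1; omega
    rw [hj']
    linear_combination ((μ l : ℂ) * Φ.eval (v l) * (starRingEnd ℂ) (v l) ^ (j - m)) * hvuj m l
  have hRm0 : ∀ m, 1 ≤ m → m ≤ j → ip μ v R (Polynomial.X ^ m) = 0 := by
    intro m h1m hmj
    rw [hRm m hmj, ho j (by omega) (j - m) (by omega), map_zero]
  have hRtop : ip μ v R (Polynomial.X ^ (j+1)) = c * ip μ v Φ Φ := by
    have e1 : ip μ v R (Polynomial.X ^ (j+1))
        = ∑ l, (μ l : ℂ) * (Polynomial.X * Φ).eval (v l) := by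
      unfold ip
      refine Finset.sum_congr rfl fun l _ => ?_
      rw [hReval l]
      simp only [eval_pow, eval_X, eval_mul, map_mul, map_pow, Complex.conj_conj]
      rw [pow_succ]
      linear_combination ((μ l : ℂ) * Φ.eval (v l) * v l) * hvuj j l
    have z1 : ∑ l, (μ l : ℂ) * (szego α (j+1)).eval (v l) = 0 := by
      have h0 := ho (j+1) hj 0 (Nat.succ_pos j)
      have h0' : (starRingEnd ℂ) (ip μ v (szego α (j+1)) (Polynomial.X ^ 0)) = 0 := by
        rw [h0, map_zero]
      rw [← h0']
      unfold ip
      rw [map_sum]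
      exact Finset.sum_congr rfl fun l _ => by simp [Complex.conj_ofReal]
    have z2 : ∑ l, (μ l : ℂ) * R.eval (v l) = ip μ v Φ Φ := by
      rw [← ip_szego_pow_self μ v α ho j (by omega)]
      unfold ip
      refine Finset.sum_congr rfl fun l _ => ?_
      rw [hReval l]
      simp only [eval_pow, eval_X]
      ring
    rw [e1]
    calc ∑ l, (μ l : ℂ) * (Polynomial.X * Φ).eval (v l)
        = ∑ l, ((μ l : ℂ) * (szego α (j+1)).eval (v l) + c * ((μ l : ℂ) * R.eval (v l))) := by
          refine Finset.sum_congr rfl fun l _ => ?_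
          rw [hs]
          simp only [eval_sub, eval_mul, eval_C]
          ring
      _ = (∑ l, (μ l : ℂ) * (szego α (j+1)).eval (v l)) + c * ∑ l, (μ l : ℂ) * R.eval (v l) := by
          rw [Finset.sum_add_distrib, Finset.mul_sum]
      _ = c * ip μ v Φ Φ := by rw [z1, z2, zero_add]
  have hRXΦ : ip μ v R (Polynomial.X * Φ) = c * ip μ v Φ Φ := by
    rw [ip_expand_right μ v R (Polynomial.X * Φ) (j+2)
      (lt_of_le_of_lt natDegree_mul_le
        (by have h := natDegree_X_le (R := ℂ); have h2 := szego_natDegree_le α j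
            rw [← hΦ] at h2; omega))]
    rw [Finset.sum_range_succ]
    have hcoefftop : (Polynomial.X * Φ).coeff (j+1) = 1 := by
      rw [Polynomial.coeff_X_mul, hΦ, szego_coeff_self]
    have hrest : ∑ m ∈ Finset.range (j+1),
        (Polynomial.X * Φ).coeff m * ip μ v R (Polynomial.X ^ m) = 0 := by
      refine Finset.sum_eq_zero fun m hm => ?_
      rcases Nat.eq_zero_or_pos m with h0 | h1
      · subst h0
        have hz : (Polynomial.X * Φ).coeff 0 = 0 := by
          rw [Polynomial.mul_coeff_zero, Polynomial.coeff_X_zero, zero_mul]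
        rw [hz, zero_mul]
      · rw [hRm0 m h1 (by have := Finset.mem_range.1 hm; omega), mul_zero]
    rw [hrest, hcoefftop, hRtop, zero_add, one_mul]
  have hXΦR : ip μ v (Polynomial.X * Φ) R = (α j) * ip μ v Φ Φ := by
    rw [← ip_conj μ v R (Polynomial.X * Φ), hRXΦ, map_mul, ip_conj μ v Φ Φ, hc,
      Complex.conj_conj]
  rw [hs]
  have expand : ip μ v (Polynomial.X * Φ - Polynomial.C c * R)
      (Polynomial.X * Φ - Polynomial.C c * R)
      = ip μ v (Polynomial.X * Φ) (Polynomial.X * Φ)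
        - c * ip μ v (Polynomial.X * Φ) R
        - (starRingEnd ℂ) c * ip μ v R (Polynomial.X * Φ)
        + (starRingEnd ℂ) c * (c * ip μ v R R) := by
    rw [ip_sub_left, ip_sub_right, ip_sub_right, ip_C_mul_left, ip_C_mul_left,
      ip_C_mul_right, ip_C_mul_right]
    ring
  rw [expand, h1, h4, hXΦR, hRXΦ, hc, Complex.conj_conj]
  have hns : ((Complex.normSq (α j) : ℂ)) = α j * (starRingEnd ℂ) (α j) :=
    (Complex.mul_conj _).symm
  rw [hns]
  ring

lemma norm_val (hv : ∀ l, norm (v l) = 1)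
    (ho : ∀ j, j < n → ∀ m, m < j → ip μ v (szego α j) (Polynomial.X ^ m) = 0)
    (hsum : ∑ l, μ l = 1) :
    ∀ j, j < n → ip μ v (szego α j) (szego α j)
      = ((∏ k ∈ Finset.range j, (1 - Complex.normSq (α k)) : ℝ) : ℂ) := by
  intro j
  induction j with
  | zero =>
    intro _
    simp only [Finset.range_zero, Finset.prod_empty, Complex.ofReal_one, szego_zero]
    unfold ip
    simp only [Polynomial.eval_one, map_one, mul_one]
    rw [← Complex.ofReal_sum]
    · rw [hsum, Complex.ofReal_one]
  | succ k ih =>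
    intro hk
    rw [norm_step μ v α hv ho k hk, ih (by omega), Finset.prod_range_succ]
    push_cast
    ring

lemma prod_norms_eq_det
    (ho : ∀ j, j < n → ∀ m, m < j → ip μ v (szego α j) (Polynomial.X ^ m) = 0) :
    ∏ j : Fin n, ip μ v (szego α (j : ℕ)) (szego α (j : ℕ))
      = (starRingEnd ℂ) (Matrix.vandermonde v).det * (Matrix.vandermonde v).det
          * ∏ l, (μ l : ℂ) := by
  classical
  set A := Matrix.vandermonde v with hA
  set T : Matrix (Fin n) (Fin n) ℂ :=
    fun a b => ip μ v (Polynomial.X ^ (a : ℕ)) (Polynomial.X ^ (b : ℕ)) with hT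
  have hTfac : T = Matrix.conjTranspose A * (Matrix.diagonal (fun l => (μ l : ℂ)) * A) := by
    ext a b
    rw [Matrix.mul_apply]
    have hd : ∀ l : Fin n, ((Matrix.diagonal (fun l => (μ l : ℂ))) * A) l b
        = (μ l : ℂ) * A l b := fun l => by rw [Matrix.diagonal_mul]
    show ip μ v (Polynomial.X ^ (a : ℕ)) (Polynomial.X ^ (b : ℕ)) = _
    unfold ip
    refine Finset.sum_congr rfl fun l _ => ?_
    rw [hd l]
    simp only [Matrix.conjTranspose_apply, hA, Matrix.vandermonde, Polynomial.eval_pow,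
      Polynomial.eval_X, Matrix.of_apply, RCLike.star_def, map_pow]
    ring
  have hdetT : T.det = (starRingEnd ℂ) A.det * A.det * ∏ l, (μ l : ℂ) := by
    rw [hTfac, Matrix.det_mul, Matrix.det_mul, Matrix.det_conjTranspose, Matrix.det_diagonal]
    simp only [RCLike.star_def]
    ring
  set Cm : Matrix (Fin n) (Fin n) ℂ := fun a b => (szego α (a : ℕ)).coeff (b : ℕ) with hCm
  have hCmtri : Cm.BlockTriangular OrderDual.toDual := by
    intro a b hab
    exact Polynomial.coeff_eq_zero_of_natDegree_lt
      (lt_of_le_of_lt (szego_natDegree_le α a) hab)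
  have hdetCm : Cm.det = 1 := by
    rw [Matrix.det_of_lowerTriangular Cm hCmtri]
    simp only [hCm, szego_coeff_self]
    exact Finset.prod_const_one
  have hCmconjtri : (Cm.map (starRingEnd ℂ)).BlockTriangular OrderDual.toDual := by
    intro a b hab
    simp only [Matrix.map_apply, hCmtri hab, map_zero]
  have hdetCmconj : (Cm.map (starRingEnd ℂ)).det = 1 := by
    rw [Matrix.det_of_lowerTriangular _ hCmconjtri]
    simp only [Matrix.map_apply]
    simp only [hCm, szego_coeff_self, map_one]
    exact Finset.prod_const_one
  set G := Cm.map (starRingEnd ℂ) * T * Matrix.transpose Cm with hG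
  have hGentry : ∀ a b : Fin n, G a b
      = ip μ v (szego α (a : ℕ)) (szego α (b : ℕ)) := by
    intro a b
    have expl : ip μ v (szego α (a : ℕ)) (szego α (b : ℕ))
        = ∑ m ∈ Finset.range n, (starRingEnd ℂ) ((szego α (a : ℕ)).coeff m)
            * ip μ v (Polynomial.X ^ m) (szego α (b : ℕ)) :=
      ip_expand_left μ v _ _ n (by rw [szego_natDegree]; exact a.isLt)
    have expl2 : ∀ m, ip μ v (Polynomial.X ^ m) (szego α (b : ℕ))
        = ∑ m' : Fin n, (szego α (b : ℕ)).coeff (m' : ℕ)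
            * ip μ v (Polynomial.X ^ m) (Polynomial.X ^ (m' : ℕ)) := fun m => by
      rw [ip_expand_right μ v _ _ n (by rw [szego_natDegree]; exact b.isLt)]
      exact (Fin.sum_univ_eq_sum_range _ n).symm
    symm
    rw [expl]
    simp only [expl2]
    rw [← Fin.sum_univ_eq_sum_range (fun m => (starRingEnd ℂ) ((szego α (a : ℕ)).coeff m)
      * ∑ m' : Fin n, (szego α (b : ℕ)).coeff (m' : ℕ)
          * ip μ v (Polynomial.X ^ m) (Polynomial.X ^ (m' : ℕ))) n]
    simp only [hG, Matrix.mul_apply, Matrix.map_apply, Matrix.transpose_apply]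
    simp only [hCm, hT,
      Finset.sum_mul, Finset.mul_sum]
    conv_rhs => rw [Finset.sum_comm]
    refine Finset.sum_congr rfl fun m _ => Finset.sum_congr rfl fun m' _ => by ring
  have hGdiag : G = Matrix.diagonal
      (fun a : Fin n => ip μ v (szego α (a : ℕ)) (szego α (a : ℕ))) := by
    ext a b
    by_cases hab : a = b
    · subst hab; rw [hGentry a a, Matrix.diagonal_apply_eq]
    · rw [Matrix.diagonal_apply_ne _ hab, hGentry a b]
      rcases lt_or_gt_of_ne hab with h | h
      · rw [← ip_conj μ v]
        rw [orth_poly μ v α ho (b : ℕ) b.isLt _ (by rw [szego_degree]; exact_mod_cast h)]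
        exact map_zero _
      · exact orth_poly μ v α ho (a : ℕ) a.isLt _ (by rw [szego_degree]; exact_mod_cast h)
  have hdetG : G.det = ∏ j : Fin n, ip μ v (szego α (j : ℕ)) (szego α (j : ℕ)) := by
    rw [hGdiag, Matrix.det_diagonal]
  rw [← hdetG, hG, Matrix.det_mul, Matrix.det_mul, hdetCmconj, Matrix.det_transpose, hdetCm,
    one_mul, mul_one, hdetT]
end

lemma prod_Ioi_eq_filter {n : ℕ} (f : Fin n → Fin n → ℂ) :
    ∏ i : Fin n, ∏ j ∈ Finset.Ioi i, f i j
      = ∏ p ∈ Finset.univ.filter (fun p : Fin n × Fin n => p.1 < p.2), f p.1 p.2 := by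
  rw [Finset.prod_sigma']
  refine Finset.prod_nbij' (fun x => (x.1, x.2)) (fun p => ⟨p.1, p.2⟩) ?_ ?_ ?_ ?_ ?_
  · intro a ha
    simp only [Finset.mem_sigma, Finset.mem_Ioi] at ha
    simp [ha.2]
  · intro p hp
    simp only [Finset.mem_filter] at hp
    simp [Finset.mem_Ioi, hp.2]
  · intro a _; rfl
  · intro p _; rfl
  · intro a _; rfl

lemma prod_prod_range_eq_pow (f : ℕ → ℝ) (m : ℕ) :
    ∏ j ∈ Finset.range (m + 1), ∏ k ∈ Finset.range j, f k
      = ∏ k ∈ Finset.range m, f k ^ (m - k) := by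
  induction m with
  | zero => simp
  | succ m ih =>
    rw [Finset.prod_range_succ, ih, Finset.prod_range_succ (fun k => f k ^ (m + 1 - k)),
      Finset.prod_range_succ f m]
    have h : ∀ k ∈ Finset.range m, f k ^ (m + 1 - k) = f k ^ (m - k) * f k := fun k hk => by
      rw [← pow_succ]; congr 1; have := Finset.mem_range.1 hk; omega
    rw [Finset.prod_congr rfl h, Finset.prod_mul_distrib]
    have h2 : m + 1 - m = 1 := by omega
    rw [h2, pow_one]
    ring

theorem verblunsky_vandermonde_weights (n : ℕ) (hn : 2 ≤ n) (θ : Fin n → ℝ)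
    (μw : Fin n → ℝ) (hμpos : ∀ j, 0 < μw j) (hsum : ∑ j, μw j = 1)
    (hdist : Function.Injective fun j => Complex.exp (Complex.I * (θ j : ℂ)))
    (α : ℕ → ℂ) (hα : ∀ k, k ≤ n - 2 → norm (α k) < 1)
    (horth : ∀ j, j < n → ∀ m, m < j →
      ∑ l, (μw l : ℂ) *
          (starRingEnd ℂ) ((szego α j).eval (Complex.exp (Complex.I * (θ l : ℂ)))) *
          (Complex.exp (Complex.I * (θ l : ℂ))) ^ m = 0) :
    ∏ j ∈ Finset.range (n - 1), (1 - norm (α j) ^ 2) ^ (n - j - 1) =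
      (norm (∏ p ∈ Finset.univ.filter (fun p : Fin n × Fin n => p.1 < p.2),
          (Complex.exp (Complex.I * (θ p.2 : ℂ)) - Complex.exp (Complex.I * (θ p.1 : ℂ))))) ^ 2 *
        ∏ j, μw j := by
  have hv : ∀ l : Fin n, norm ((fun l : Fin n => Complex.exp (Complex.I * (θ l : ℂ))) l)
      = 1 := by
    intro l
    rw [Complex.norm_exp]
    norm_num [Complex.mul_re, Complex.I_re, Complex.I_im, Complex.ofReal_re, Complex.ofReal_im]
  have ho : ∀ j, j < n → ∀ m, m < j →
      ip μw (fun l : Fin n => Complex.exp (Complex.I * (θ l : ℂ))) (szego α j)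
        (Polynomial.X ^ m) = 0 := by
    intro j hj m hm
    have h := horth j hj m hm
    simp only [ip, Polynomial.eval_pow, Polynomial.eval_X]
    exact h
  have hNval := norm_val μw (fun l : Fin n => Complex.exp (Complex.I * (θ l : ℂ))) α hv ho hsum
  have hprod := prod_norms_eq_det μw (fun l : Fin n => Complex.exp (Complex.I * (θ l : ℂ))) α ho
  set d := (Matrix.vandermonde (fun l : Fin n => Complex.exp (Complex.I * (θ l : ℂ)))).det
    with hd_def
  have hPfin : ∏ j : Fin n,
      ip μw (fun l : Fin n => Complex.exp (Complex.I * (θ l : ℂ))) (szego α (j : ℕ))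
        (szego α (j : ℕ))
      = ((∏ j ∈ Finset.range n, ∏ k ∈ Finset.range j, (1 - Complex.normSq (α k)) : ℝ) : ℂ) := by
    calc ∏ j : Fin n,
        ip μw (fun l : Fin n => Complex.exp (Complex.I * (θ l : ℂ))) (szego α (j : ℕ))
          (szego α (j : ℕ))
        = ∏ j : Fin n,
            ((∏ k ∈ Finset.range (j : ℕ), (1 - Complex.normSq (α k)) : ℝ) : ℂ) :=
          Finset.prod_congr rfl (fun j _ => hNval (j : ℕ) j.isLt)
      _ = ((∏ j : Fin n, ∏ k ∈ Finset.range (j : ℕ), (1 - Complex.normSq (α k)) : ℝ) : ℂ) :=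
          (Complex.ofReal_prod _ _).symm
      _ = ((∏ j ∈ Finset.range n, ∏ k ∈ Finset.range j,
            (1 - Complex.normSq (α k)) : ℝ) : ℂ) := by
          rw [Fin.prod_univ_eq_prod_range
            (fun j => ∏ k ∈ Finset.range j, (1 - Complex.normSq (α k))) n]
  have hcomb : ((∏ j ∈ Finset.range n, ∏ k ∈ Finset.range j,
      (1 - Complex.normSq (α k)) : ℝ) : ℂ)
      = ((norm d ^ 2 * ∏ l, μw l : ℝ) : ℂ) := by
    rw [← hPfin, hprod]
    rw [show (starRingEnd ℂ) d * d = d * (starRingEnd ℂ) d from mul_comm _ _, Complex.mul_conj]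
    rw [← Complex.ofReal_prod]
    push_cast [Complex.normSq_eq_norm_sq]
    ring
  have hreal : (∏ j ∈ Finset.range n, ∏ k ∈ Finset.range j, (1 - Complex.normSq (α k)))
      = norm d ^ 2 * ∏ l, μw l := by
    exact_mod_cast hcomb
  have hswap : (∏ j ∈ Finset.range n, ∏ k ∈ Finset.range j, (1 - Complex.normSq (α k)))
      = ∏ k ∈ Finset.range (n - 1), (1 - Complex.normSq (α k)) ^ (n - 1 - k) := by
    have hrange : Finset.range n = Finset.range ((n - 1) + 1) := by congr 1; omega
    rw [hrange, prod_prod_range_eq_pow]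
  have habs : d = ∏ p ∈ Finset.univ.filter (fun p : Fin n × Fin n => p.1 < p.2),
      (Complex.exp (Complex.I * (θ p.2 : ℂ)) - Complex.exp (Complex.I * (θ p.1 : ℂ))) := by
    rw [hd_def, Matrix.det_vandermonde]
    exact prod_Ioi_eq_filter
      (fun i j => Complex.exp (Complex.I * (θ j : ℂ)) - Complex.exp (Complex.I * (θ i : ℂ)))
  calc ∏ j ∈ Finset.range (n - 1), (1 - norm (α j) ^ 2) ^ (n - j - 1)
      = ∏ k ∈ Finset.range (n - 1), (1 - Complex.normSq (α k)) ^ (n - 1 - k) := by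
        refine Finset.prod_congr rfl fun j _ => ?_
        rw [Complex.normSq_eq_norm_sq]
        congr 1
        omega
    _ = ∏ j ∈ Finset.range n, ∏ k ∈ Finset.range j, (1 - Complex.normSq (α k)) := hswap.symm
    _ = norm d ^ 2 * ∏ l, μw l := hreal
    _ = _ := by rw [habs]
end

section
/- Let C(α_0,...,α_n) be the unitary (n+1)×(n+1) CMV matrix with α_0,...,α_{n-1} ∈ 𝔻 and α_n on the unit circle, with n even. Then the n×n matrix obtained by deleting the first row and first column of C(α_0,...,α_n) is unitarily equivalent (via some unitary S) to the transpose of the CMV matrix C(-conj(α_{n-1})α_n, -conj(α_{n-2})α_n, ..., -conj(α_0)α_n). -/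
open Matrix

/-- `ρ_k = √(1 - |α_k|²)` as a complex number. -/
noncomputable def cmvRho (α : ℕ → ℂ) (k : ℕ) : ℂ :=
  ((Real.sqrt (1 - ‖α k‖ ^ 2) : ℝ) : ℂ)

/-- Entries of the block-diagonal factor `L = diag(Ξ_0, Ξ_2, Ξ_4, …)`, where
`Ξ_k = [[conj α_k, ρ_k],[ρ_k, -α_k]]`. -/
noncomputable def cmvLEntry (α : ℕ → ℂ) (j k : ℕ) : ℂ :=
  if j = k then (if Even j then (starRingEnd ℂ) (α j) else -α (j - 1))
  else if k = j + 1 ∧ Even j then cmvRho α j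
  else if j = k + 1 ∧ Even k then cmvRho α k
  else 0

/-- Entries of the block-diagonal factor `M = diag(Ξ_{-1}, Ξ_1, Ξ_3, …)`, where
`Ξ_{-1} = [1]`. -/
noncomputable def cmvMEntry (α : ℕ → ℂ) (j k : ℕ) : ℂ :=
  if j = 0 ∧ k = 0 then 1
  else if j = k then (if Odd j then (starRingEnd ℂ) (α j) else -α (j - 1))
  else if k = j + 1 ∧ Odd j then cmvRho α j
  else if j = k + 1 ∧ Odd k then cmvRho α k
  else 0

/-- The `N×N` CMV matrix `C = L·M` with Verblunsky coefficients `α_0, …, α_{N-1}`. -/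
noncomputable def cmvMatrix (N : ℕ) (α : ℕ → ℂ) : Matrix (Fin N) (Fin N) ℂ :=
  (Matrix.of fun j k : Fin N => cmvLEntry α j k) *
    (Matrix.of fun j k : Fin N => cmvMEntry α j k)

private lemma L_diag (α : ℕ → ℂ) (j : ℕ) :
    cmvLEntry α j j = if Even j then (starRingEnd ℂ) (α j) else -α (j - 1) := by
  unfold cmvLEntry; rw [if_pos rfl]

private lemma L_up (α : ℕ → ℂ) {j : ℕ} (h : Even j) : cmvLEntry α j (j+1) = cmvRho α j := by
  unfold cmvLEntry; rw [if_neg (by omega), if_pos ⟨rfl, h⟩]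

private lemma L_down (α : ℕ → ℂ) {k : ℕ} (h : Even k) : cmvLEntry α (k+1) k = cmvRho α k := by
  unfold cmvLEntry; rw [if_neg (by omega), if_neg (by omega), if_pos ⟨rfl, h⟩]

private lemma L_zero (α : ℕ → ℂ) {j k : ℕ} (h1 : j ≠ k) (h2 : ¬(k = j + 1 ∧ Even j))
    (h3 : ¬(j = k + 1 ∧ Even k)) : cmvLEntry α j k = 0 := by
  unfold cmvLEntry; rw [if_neg h1, if_neg h2, if_neg h3]

private lemma M_00 (α : ℕ → ℂ) : cmvMEntry α 0 0 = 1 := by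
  unfold cmvMEntry; rw [if_pos ⟨rfl, rfl⟩]

private lemma M_diag (α : ℕ → ℂ) {j : ℕ} (h : j ≠ 0) :
    cmvMEntry α j j = if Odd j then (starRingEnd ℂ) (α j) else -α (j - 1) := by
  unfold cmvMEntry; rw [if_neg (by omega), if_pos rfl]

private lemma M_up (α : ℕ → ℂ) {j : ℕ} (h : Odd j) : cmvMEntry α j (j+1) = cmvRho α j := by
  unfold cmvMEntry; rw [if_neg (by omega), if_neg (by omega), if_pos ⟨rfl, h⟩]

private lemma M_down (α : ℕ → ℂ) {k : ℕ} (h : Odd k) : cmvMEntry α (k+1) k = cmvRho α k := by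
  unfold cmvMEntry; rw [if_neg (by omega), if_neg (by omega), if_neg (by omega), if_pos ⟨rfl, h⟩]

private lemma M_zero (α : ℕ → ℂ) {j k : ℕ} (h1 : j ≠ k) (h2 : ¬(k = j + 1 ∧ Odd j))
    (h3 : ¬(j = k + 1 ∧ Odd k)) : cmvMEntry α j k = 0 := by
  unfold cmvMEntry
  rw [if_neg (by omega), if_neg h1, if_neg h2, if_neg h3]

private lemma cmv_conj_mul {z : ℂ} (hz : ‖z‖ = 1) : (starRingEnd ℂ) z * z = 1 := by
  rw [mul_comm, Complex.mul_conj, Complex.normSq_eq_norm_sq, hz]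
  norm_num

private lemma cmv_rho_flip {n : ℕ} {α β : ℕ → ℂ}
    (hβ : ∀ m, β m = -(starRingEnd ℂ) (α (n-1-m)) * α n) (h2 : ‖α n‖ = 1)
    (m : ℕ) : cmvRho β m = cmvRho α (n-1-m) := by
  unfold cmvRho
  rw [hβ]
  norm_num [norm_mul, norm_neg, Complex.norm_conj, h2]

private lemma cmv_lemA {n : ℕ} (heven : Even n) {α β : ℕ → ℂ}
    (hβ : ∀ m, β m = -(starRingEnd ℂ) (α (n-1-m)) * α n) (h2 : ‖α n‖ = 1)
    (j k : ℕ) (hj : j < n) (hk : k < n) :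
    (if Even j then (1:ℂ) else (starRingEnd ℂ) (α n)) *
      cmvMEntry β (n-1-j) (n-1-k) *
      (if Even k then α n else 1) = cmvLEntry α (j+1) (k+1) := by
  have hc : (starRingEnd ℂ) (α n) * α n = 1 := cmv_conj_mul h2
  have hn2 : n % 2 = 0 := Nat.even_iff.mp heven
  by_cases hd : j = k
  · subst hd
    by_cases hj2 : j % 2 = 0
    · -- j even: n-1-j ≥ 1 odd
      rw [if_pos (show Even j from Nat.even_iff.mpr hj2),
        if_pos (show Even j from Nat.even_iff.mpr hj2), M_diag β (by omega),
        if_pos (show Odd (n-1-j) from Nat.odd_iff.mpr (by omega)), L_diag,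
        if_neg (show ¬ Even (j+1) by rw [Nat.even_add_one, Nat.even_iff]; omega),
        hβ, show n-1-(n-1-j) = j from by omega, _root_.map_mul, map_neg, Complex.conj_conj,
        show j + 1 - 1 = j from rfl]
      linear_combination (-α j) * hc
    · -- j odd
      rw [if_neg (show ¬ Even j by rw [Nat.even_iff]; omega),
        if_neg (show ¬ Even j by rw [Nat.even_iff]; omega),
        L_diag, if_pos (show Even (j+1) by rw [Nat.even_add_one, Nat.even_iff]; omega)]
      by_cases hlast : j = n - 1
      · rw [show n-1-j = 0 from by omega, M_00, show j + 1 = n from by omega]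
        ring
      · rw [M_diag β (by omega), if_neg (show ¬ Odd (n-1-j) by rw [Nat.odd_iff]; omega),
          hβ, show n-1-(n-1-j-1) = j+1 from by omega]
        linear_combination ((starRingEnd ℂ) (α (j+1))) * hc
  · by_cases h3 : k = j + 1
    · subst h3
      by_cases hj2 : j % 2 = 0
      · -- both zero
        rw [M_zero β (by omega) (by rintro ⟨h, -⟩; omega)
            (by rintro ⟨-, h⟩; rw [Nat.odd_iff] at h; omega),
          L_zero α (by omega) (by rintro ⟨-, h⟩; rw [Nat.even_add_one, Nat.even_iff] at h; exact h hj2)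
            (by rintro ⟨h, -⟩; omega)]
        ring
      · rw [show n-1-j = (n-1-(j+1)) + 1 from by omega, M_down β (by rw [Nat.odd_iff]; omega),
          cmv_rho_flip hβ h2, show n-1-(n-1-(j+1)) = j+1 from by omega,
          L_up α (by rw [Nat.even_add_one, Nat.even_iff]; omega),
          if_neg (show ¬ Even j by rw [Nat.even_iff]; omega),
          if_pos (show Even (j+1) by rw [Nat.even_add_one, Nat.even_iff]; omega)]
        linear_combination (cmvRho α (j+1)) * hc
    · by_cases h4 : j = k + 1
      · subst h4
        by_cases hk2 : k % 2 = 0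
        · rw [M_zero β (by omega) (by rintro ⟨-, h⟩; rw [Nat.odd_iff] at h; omega)
              (by rintro ⟨h, -⟩; omega),
            L_zero α (by omega) (by rintro ⟨h, -⟩; omega)
              (by rintro ⟨-, h⟩; rw [Nat.even_add_one, Nat.even_iff] at h; exact h hk2)]
          ring
        · rw [show n-1-k = (n-1-(k+1)) + 1 from by omega, M_up β (by rw [Nat.odd_iff]; omega),
            cmv_rho_flip hβ h2, show n-1-(n-1-(k+1)) = k+1 from by omega,
            L_down α (by rw [Nat.even_add_one, Nat.even_iff]; omega),
            if_pos (show Even (k+1) by rw [Nat.even_add_one, Nat.even_iff]; omega),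
            if_neg (show ¬ Even k by rw [Nat.even_iff]; omega)]
          ring
      · rw [M_zero β (by omega) (by rintro ⟨h, -⟩; omega) (by rintro ⟨h, -⟩; omega),
          L_zero α (by omega) (by rintro ⟨h, -⟩; omega) (by rintro ⟨h, -⟩; omega)]
        ring

private lemma cmv_lemB {n : ℕ} (heven : Even n) {α β : ℕ → ℂ}
    (hβ : ∀ m, β m = -(starRingEnd ℂ) (α (n-1-m)) * α n) (h2 : ‖α n‖ = 1)
    (j k : ℕ) (hj : j < n) (hk : k < n) :
    (if Even j then (starRingEnd ℂ) (α n) else (1:ℂ)) *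
      cmvLEntry β (n-1-j) (n-1-k) *
      (if Even k then (1:ℂ) else α n) = cmvMEntry α (j+1) (k+1) := by
  have hc : (starRingEnd ℂ) (α n) * α n = 1 := cmv_conj_mul h2
  have hn2 : n % 2 = 0 := Nat.even_iff.mp heven
  by_cases hd : j = k
  · subst hd
    rw [M_diag α (by omega)]
    by_cases hj2 : j % 2 = 0
    · -- j even : n-1-j odd
      rw [if_pos (show Even j from Nat.even_iff.mpr hj2),
        if_pos (show Even j from Nat.even_iff.mpr hj2), L_diag,
        if_neg (show ¬ Even (n-1-j) by rw [Nat.even_iff]; omega),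
        if_pos (show Odd (j+1) by rw [Nat.odd_iff]; omega),
        hβ, show n-1-(n-1-j-1) = j+1 from by omega]
      linear_combination ((starRingEnd ℂ) (α (j+1))) * hc
    · -- j odd : n-1-j even
      rw [if_neg (show ¬ Even j by rw [Nat.even_iff]; omega),
        if_neg (show ¬ Even j by rw [Nat.even_iff]; omega), L_diag,
        if_pos (show Even (n-1-j) by rw [Nat.even_iff]; omega),
        if_neg (show ¬ Odd (j+1) by rw [Nat.odd_iff]; omega),
        hβ, show n-1-(n-1-j) = j from by omega, _root_.map_mul, map_neg, Complex.conj_conj,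
        show j + 1 - 1 = j from rfl]
      linear_combination (-α j) * hc
  · by_cases h3 : k = j + 1
    · subst h3
      by_cases hj2 : j % 2 = 0
      · rw [show n-1-j = (n-1-(j+1)) + 1 from by omega,
          L_down β (show Even (n-1-(j+1)) by rw [Nat.even_iff]; omega),
          cmv_rho_flip hβ h2, show n-1-(n-1-(j+1)) = j+1 from by omega,
          M_up α (show Odd (j+1) by rw [Nat.odd_iff]; omega),
          if_pos (show Even j from Nat.even_iff.mpr hj2),
          if_neg (show ¬ Even (j+1) by rw [Nat.even_add_one, Nat.even_iff]; omega)]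
        linear_combination (cmvRho α (j+1)) * hc
      · rw [L_zero β (by omega) (by rintro ⟨h, -⟩; omega)
            (by rintro ⟨-, h⟩; rw [Nat.even_iff] at h; omega),
          M_zero α (by omega) (by rintro ⟨-, h⟩; rw [Nat.odd_iff] at h; omega)
            (by rintro ⟨h, -⟩; omega)]
        ring
    · by_cases h4 : j = k + 1
      · subst h4
        by_cases hk2 : k % 2 = 0
        · rw [show n-1-k = (n-1-(k+1)) + 1 from by omega,
            L_up β (show Even (n-1-(k+1)) by rw [Nat.even_iff]; omega),
            cmv_rho_flip hβ h2, show n-1-(n-1-(k+1)) = k+1 from by omega,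
            M_down α (show Odd (k+1) by rw [Nat.odd_iff]; omega),
            if_neg (show ¬ Even (k+1) by rw [Nat.even_add_one, Nat.even_iff]; omega),
            if_pos (show Even k from Nat.even_iff.mpr hk2)]
          ring
        · rw [L_zero β (by omega) (by rintro ⟨-, h⟩; rw [Nat.even_iff] at h; omega)
              (by rintro ⟨h, -⟩; omega),
            M_zero α (by omega) (by rintro ⟨h, -⟩; omega)
              (by rintro ⟨-, h⟩; rw [Nat.odd_iff] at h; omega)]
          ring
      · rw [L_zero β (by omega) (by rintro ⟨h, -⟩; omega) (by rintro ⟨h, -⟩; omega),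
          M_zero α (by omega) (by rintro ⟨h, -⟩; omega) (by rintro ⟨h, -⟩; omega)]
        ring

private lemma L_symm (α : ℕ → ℂ) (j k : ℕ) : cmvLEntry α j k = cmvLEntry α k j := by
  by_cases h : j = k
  · subst h; rfl
  · unfold cmvLEntry
    rw [if_neg h, if_neg (Ne.symm h)]
    simp only [Nat.even_iff]
    split_ifs <;> first | rfl | omega | (exfalso; omega)

private lemma M_symm (α : ℕ → ℂ) (j k : ℕ) : cmvMEntry α j k = cmvMEntry α k j := by
  by_cases h : j = k
  · subst h; rfl
  · unfold cmvMEntry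
    rw [if_neg (show ¬(j = 0 ∧ k = 0) by omega), if_neg (show ¬(k = 0 ∧ j = 0) by omega),
      if_neg h, if_neg (Ne.symm h)]
    simp only [Nat.odd_iff]
    split_ifs <;> first | rfl | omega | (exfalso; omega)

private lemma cmv_trunc (n : ℕ) (α : ℕ → ℂ) :
    (cmvMatrix (n + 1) α).submatrix Fin.succ Fin.succ =
      (Matrix.of fun j k : Fin n => cmvLEntry α ((j:ℕ)+1) ((k:ℕ)+1)) *
        (Matrix.of fun j k : Fin n => cmvMEntry α ((j:ℕ)+1) ((k:ℕ)+1)) := by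
  ext j k
  simp only [Matrix.submatrix_apply, cmvMatrix, Matrix.mul_apply, Matrix.of_apply]
  rw [Fin.sum_univ_succ]
  have h0 : cmvMEntry α ((0 : Fin (n+1)) : ℕ) ((Fin.succ k : Fin (n+1)) : ℕ) = 0 := by
    simp only [Fin.val_zero, Fin.val_succ]
    exact M_zero α (by omega) (by rintro ⟨-, h⟩; rw [Nat.odd_iff] at h; omega) (by omega)
  rw [h0, mul_zero, zero_add]
  exact Finset.sum_congr rfl fun i _ => by simp [Fin.val_succ]


/-- for `n` even, `α_0,…,α_{n-1} ∈ 𝔻` and `|α_n| = 1`, the matrix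
obtained by deleting the first row and column of the `(n+1)×(n+1)` CMV matrix
`C(α_0,…,α_n)` is unitarily equivalent to the transpose of
`C(-conj(α_{n-1})α_n, …, -conj(α_0)α_n)`. -/
theorem cmv_truncation_even (n : ℕ) (hn : 0 < n) (heven : Even n) (α : ℕ → ℂ)
    (h1 : ∀ k, k < n → ‖α k‖ < 1) (h2 : ‖α n‖ = 1) :
    ∃ S : Matrix (Fin n) (Fin n) ℂ, S * Sᴴ = 1 ∧ Sᴴ * S = 1 ∧
      (cmvMatrix (n + 1) α).submatrix Fin.succ Fin.succ =
        Sᴴ * (cmvMatrix n (fun k => -(starRingEnd ℂ) (α (n - 1 - k)) * α n))ᵀ * S := by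
  classical
  set β : ℕ → ℂ := fun m => -(starRingEnd ℂ) (α (n - 1 - m)) * α n with hβdef
  have hβ : ∀ m, β m = -(starRingEnd ℂ) (α (n-1-m)) * α n := fun m => rfl
  have hc : (starRingEnd ℂ) (α n) * α n = 1 := cmv_conj_mul h2
  set d : Fin n → ℂ := fun j => if Even (j:ℕ) then 1 else α n with hd
  set e : Fin n → ℂ := fun j => if Even (j:ℕ) then α n else 1 with he
  set J : Matrix (Fin n) (Fin n) ℂ := Matrix.of fun j k => if j = Fin.rev k then 1 else 0
    with hJdef
  have hrevval : ∀ j : Fin n, ((Fin.rev j : Fin n) : ℕ) = n - 1 - (j:ℕ) := by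
    intro j; rw [Fin.val_rev]; omega
  have hrevsymm : ∀ j k : Fin n, (j = Fin.rev k) = (k = Fin.rev j) := by
    intro j k; apply propext
    constructor <;> (rintro rfl; rw [Fin.rev_rev])
  have hAJ : ∀ (A : Matrix (Fin n) (Fin n) ℂ) (j k : Fin n),
      (A * J) j k = A j (Fin.rev k) := by
    intro A j k
    rw [Matrix.mul_apply]
    simp [hJdef, mul_ite]
  have hJA : ∀ (A : Matrix (Fin n) (Fin n) ℂ) (j k : Fin n),
      (J * A) j k = A (Fin.rev j) k := by
    intro A j k
    rw [Matrix.mul_apply]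
    calc ∑ m, J j m * A m k = ∑ m, (if m = Fin.rev j then 1 else 0) * A m k := by
          refine Finset.sum_congr rfl fun m _ => ?_
          exact congrArg (· * A m k) (if_congr (iff_of_eq (hrevsymm j m)) rfl rfl)
      _ = A (Fin.rev j) k := by simp [ite_mul]
  have hJJ : J * J = 1 := by
    ext j k
    rw [hJA, hJdef, Matrix.of_apply, Matrix.one_apply]
    exact if_congr (by rw [hrevsymm, Fin.rev_rev]; exact eq_comm) rfl rfl
  have hJH : Jᴴ = J := by
    ext j k
    rw [Matrix.conjTranspose_apply, hJdef, Matrix.of_apply, Matrix.of_apply,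
      apply_ite (star : ℂ → ℂ), star_one, star_zero]
    exact if_congr (iff_of_eq (hrevsymm k j)) rfl rfl
  have hJXJ : ∀ A : Matrix (Fin n) (Fin n) ℂ,
      J * A * J = A.submatrix Fin.rev Fin.rev := by
    intro A; ext j k
    rw [hAJ, hJA, Matrix.submatrix_apply]
  -- the unitary S
  refine ⟨J * Matrix.diagonal d, ?_, ?_, ?_⟩
  · rw [Matrix.conjTranspose_mul, Matrix.diagonal_conjTranspose, hJH,
      Matrix.mul_assoc, ← Matrix.mul_assoc (Matrix.diagonal d),
      Matrix.diagonal_mul_diagonal]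
    have : (fun j => d j * (star d) j) = fun _ => (1:ℂ) := by
      funext j
      simp only [hd, Pi.star_apply]
      by_cases hj : Even (j:ℕ)
      · simp [hj]
      · rw [if_neg hj, Complex.star_def]
        linear_combination hc
    rw [this, Matrix.diagonal_one, Matrix.one_mul, hJJ]
  · rw [Matrix.conjTranspose_mul, Matrix.diagonal_conjTranspose, hJH,
      Matrix.mul_assoc, ← Matrix.mul_assoc J, hJJ, Matrix.one_mul,
      Matrix.diagonal_mul_diagonal]
    have : (fun j => (star d) j * d j) = fun _ => (1:ℂ) := by
      funext j
      simp only [hd, Pi.star_apply]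
      by_cases hj : Even (j:ℕ)
      · simp [hj]
      · rw [if_neg hj, Complex.star_def]
        linear_combination hc
    rw [this, Matrix.diagonal_one]
  · -- main equality
    set L' : Matrix (Fin n) (Fin n) ℂ := Matrix.of fun j k : Fin n => cmvLEntry β j k with hL'
    set M' : Matrix (Fin n) (Fin n) ℂ := Matrix.of fun j k : Fin n => cmvMEntry β j k with hM'
    have hCT : (cmvMatrix n β)ᵀ = M' * L' := by
      rw [cmvMatrix, Matrix.transpose_mul]
      congr 1
      · ext j k; rw [Matrix.transpose_apply, hM', Matrix.of_apply, Matrix.of_apply, M_symm]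
      · ext j k; rw [Matrix.transpose_apply, hL', Matrix.of_apply, Matrix.of_apply, L_symm]
    have hA : Matrix.diagonal (star d) * (M'.submatrix Fin.rev Fin.rev) * Matrix.diagonal e
        = Matrix.of fun j k : Fin n => cmvLEntry α ((j:ℕ)+1) ((k:ℕ)+1) := by
      ext j k
      rw [Matrix.mul_diagonal, Matrix.diagonal_mul, Matrix.submatrix_apply, hM',
        Matrix.of_apply, Matrix.of_apply, Pi.star_apply, hd, he,
        hrevval j, hrevval k]
      have := cmv_lemA heven hβ h2 (j:ℕ) (k:ℕ) j.isLt k.isLt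
      rw [← this]
      congr 1
      rw [apply_ite (star : ℂ → ℂ), star_one, Complex.star_def]
    have hB : Matrix.diagonal (star e) * (L'.submatrix Fin.rev Fin.rev) * Matrix.diagonal d
        = Matrix.of fun j k : Fin n => cmvMEntry α ((j:ℕ)+1) ((k:ℕ)+1) := by
      ext j k
      rw [Matrix.mul_diagonal, Matrix.diagonal_mul, Matrix.submatrix_apply, hL',
        Matrix.of_apply, Matrix.of_apply, Pi.star_apply, hd, he,
        hrevval j, hrevval k]
      have := cmv_lemB heven hβ h2 (j:ℕ) (k:ℕ) j.isLt k.isLt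
      rw [← this]
      congr 1
      rw [apply_ite (star : ℂ → ℂ), star_one, Complex.star_def]
    have hee : Matrix.diagonal e * Matrix.diagonal (star e) = 1 := by
      rw [Matrix.diagonal_mul_diagonal]
      have : (fun j => e j * (star e) j) = fun _ => (1:ℂ) := by
        funext j
        simp only [he, Pi.star_apply]
        by_cases hj : Even (j:ℕ)
        · rw [if_pos hj, Complex.star_def]
          linear_combination hc
        · simp [hj]
      rw [this, Matrix.diagonal_one]
    rw [cmv_trunc, hCT, Matrix.conjTranspose_mul, Matrix.diagonal_conjTranspose, hJH,
      ← hA, ← hB]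
    have h1' : ∀ X : Matrix (Fin n) (Fin n) ℂ, J * (J * X) = X := by
      intro X; rw [← Matrix.mul_assoc, hJJ, Matrix.one_mul]
    have h2' : ∀ X : Matrix (Fin n) (Fin n) ℂ,
        Matrix.diagonal e * (Matrix.diagonal (star e) * X) = X := by
      intro X; rw [← Matrix.mul_assoc, hee, Matrix.one_mul]
    rw [← hJXJ M', ← hJXJ L']
    simp only [Matrix.mul_assoc, h1', h2']
end

section
/- Let N be the unitary matrix diag([1], Ψ_1, Ψ_3, ...) where Ψ_k = (2(1 - Re α_k))^{-1/2} [[i(1 - conj(α_k)), -i ρ_k],[ρ_k, 1 - α_k]], with α_k ∈ 𝔻, Re α_k < 1, ρ_k = √(1-|α_k|²), and let M = diag([1], Ξ_1, Ξ_3, ...) with Ξ_k = [[conj(α_k), ρ_k],[ρ_k, -α_k]]. Then N is unitary and Nᵀ N = M. -/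
open Matrix

/-- The normalizing constant `(2(1 - Re α_k))^{-1/2}` as a complex number. -/
noncomputable def psiConst (α : ℕ → ℂ) (k : ℕ) : ℂ :=
  (((Real.sqrt (2 * (1 - (α k).re)))⁻¹ : ℝ) : ℂ)

/-- Entries of `N = diag([1], Ψ_1, Ψ_3, …)` with
`Ψ_k = (2(1-Re α_k))^{-1/2} [[i(1-conj α_k), -i ρ_k],[ρ_k, 1-α_k]]`,
the block `Ψ_k` occupying rows/columns `k, k+1` for odd `k`. -/
noncomputable def nEntry (α : ℕ → ℂ) (j k : ℕ) : ℂ :=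
  if j = 0 ∧ k = 0 then 1
  else if j = k then
    (if Odd j then psiConst α j * (Complex.I * (1 - (starRingEnd ℂ) (α j)))
      else psiConst α (j - 1) * (1 - α (j - 1)))
  else if k = j + 1 ∧ Odd j then psiConst α j * (-Complex.I * cmvRho α j)
  else if j = k + 1 ∧ Odd k then psiConst α k * cmvRho α k
  else 0

/-- Entries of `M = diag([1], Ξ_1, Ξ_3, …)` with `Ξ_k = [[conj α_k, ρ_k],[ρ_k, -α_k]]`. -/
noncomputable def mEntry (α : ℕ → ℂ) (j k : ℕ) : ℂ :=
  if j = 0 ∧ k = 0 then 1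
  else if j = k then (if Odd j then (starRingEnd ℂ) (α j) else -α (j - 1))
  else if k = j + 1 ∧ Odd j then cmvRho α j
  else if j = k + 1 ∧ Odd k then cmvRho α k
  else 0

def blk (j : ℕ) : ℕ := if j = 0 then 0 else if Odd j then j else j - 1

lemma blk_self_or (l : ℕ) : l = blk l ∨ l = blk l + 1 := by
  unfold blk; simp only [Nat.odd_iff]; split_ifs <;> first | contradiction | omega

lemma blk_zero_iff (l : ℕ) : blk l = 0 ↔ l = 0 := by
  unfold blk; simp only [Nat.odd_iff]; split_ifs <;> first | contradiction | omega

lemma blk_odd (j : ℕ) (hj : j ≠ 0) : Odd (blk j) := by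
  unfold blk; simp only [Nat.odd_iff]; split_ifs <;> first | contradiction | omega

lemma blk_le (j : ℕ) : blk j ≤ j := by
  unfold blk; simp only [Nat.odd_iff]; split_ifs <;> first | contradiction | omega

lemma blk_odd_self {i : ℕ} (hi : Odd i) : blk i = i := by
  rw [Nat.odd_iff] at hi; unfold blk; simp only [Nat.odd_iff]; split_ifs <;> first | contradiction | omega

lemma blk_odd_succ {i : ℕ} (hi : Odd i) : blk (i + 1) = i := by
  rw [Nat.odd_iff] at hi; unfold blk; simp only [Nat.odd_iff]; split_ifs <;> first | contradiction | omega

lemma nEntry_eq_zero (α : ℕ → ℂ) {j k : ℕ} (h : blk j ≠ blk k) : nEntry α j k = 0 := by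
  unfold nEntry
  unfold blk at h
  simp only [Nat.odd_iff] at h ⊢
  split_ifs at h ⊢ <;> first | rfl | omega

lemma mEntry_eq_zero (α : ℕ → ℂ) {j k : ℕ} (h : blk j ≠ blk k) : mEntry α j k = 0 := by
  unfold mEntry
  unfold blk at h
  simp only [Nat.odd_iff] at h ⊢
  split_ifs at h ⊢ <;> first | rfl | omega

lemma nEntry_zero_zero (α : ℕ → ℂ) : nEntry α 0 0 = 1 := by simp [nEntry]

lemma nEntry_e1 (α : ℕ → ℂ) {i : ℕ} (hi : Odd i) :
    nEntry α i i = psiConst α i * (Complex.I * (1 - (starRingEnd ℂ) (α i))) := by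
  have h0 : i ≠ 0 := by rintro rfl; simp at hi
  simp [nEntry, h0, hi]

lemma nEntry_e2 (α : ℕ → ℂ) {i : ℕ} (hi : Odd i) :
    nEntry α i (i + 1) = psiConst α i * (-Complex.I * cmvRho α i) := by
  have h0 : i ≠ 0 := by rintro rfl; simp at hi
  rw [Nat.odd_iff] at hi
  unfold nEntry; simp only [Nat.odd_iff, true_and, and_true, false_and, and_false, if_false, if_true]; split_ifs <;> first | rfl | contradiction | omega | (exfalso; omega)

lemma nEntry_e3 (α : ℕ → ℂ) {i : ℕ} (hi : Odd i) :
    nEntry α (i + 1) i = psiConst α i * cmvRho α i := by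
  rw [Nat.odd_iff] at hi
  unfold nEntry; simp only [Nat.odd_iff, true_and, and_true, false_and, and_false, if_false, if_true]; split_ifs <;> first | rfl | contradiction | omega | (exfalso; omega)

lemma nEntry_e4 (α : ℕ → ℂ) {i : ℕ} (hi : Odd i) :
    nEntry α (i + 1) (i + 1) = psiConst α i * (1 - α i) := by
  rw [Nat.odd_iff] at hi
  unfold nEntry; simp only [Nat.odd_iff, Nat.add_sub_cancel, true_and, and_true, false_and, and_false, if_false, if_true]; split_ifs <;> first | rfl | contradiction | omega | (exfalso; omega)

lemma mEntry_e1 (α : ℕ → ℂ) {i : ℕ} (hi : Odd i) : mEntry α i i = (starRingEnd ℂ) (α i) := by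
  have h0 : i ≠ 0 := by rintro rfl; simp at hi
  simp [mEntry, h0, hi]

lemma mEntry_e2 (α : ℕ → ℂ) {i : ℕ} (hi : Odd i) : mEntry α i (i + 1) = cmvRho α i := by
  rw [Nat.odd_iff] at hi
  unfold mEntry; simp only [Nat.odd_iff, true_and, and_true, false_and, and_false, if_false, if_true]; split_ifs <;> first | rfl | contradiction | omega | (exfalso; omega)

lemma mEntry_e3 (α : ℕ → ℂ) {i : ℕ} (hi : Odd i) : mEntry α (i + 1) i = cmvRho α i := by
  rw [Nat.odd_iff] at hi
  unfold mEntry; simp only [Nat.odd_iff, true_and, and_true, false_and, and_false, if_false, if_true]; split_ifs <;> first | rfl | contradiction | omega | (exfalso; omega)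

lemma mEntry_e4 (α : ℕ → ℂ) {i : ℕ} (hi : Odd i) : mEntry α (i + 1) (i + 1) = -α i := by
  rw [Nat.odd_iff] at hi
  unfold mEntry; simp only [Nat.odd_iff, Nat.add_sub_cancel, true_and, and_true, false_and, and_false, if_false, if_true]; split_ifs <;> first | rfl | contradiction | omega | (exfalso; omega)

lemma psi_mul (α : ℕ → ℂ) (k : ℕ) (h2 : (α k).re < 1) :
    psiConst α k * psiConst α k * (2 - α k - (starRingEnd ℂ) (α k)) = 1 := by
  have hx : (0:ℝ) < 2*(1-(α k).re) := by linarith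
  have e1 : psiConst α k * psiConst α k = (((2*(1-(α k).re))⁻¹ : ℝ) : ℂ) := by
    unfold psiConst
    rw [← Complex.ofReal_mul, ← mul_inv, Real.mul_self_sqrt hx.le]
  have e2 : (2 : ℂ) - α k - (starRingEnd ℂ) (α k) = ((2*(1-(α k).re) : ℝ) : ℂ) := by
    have h := Complex.add_conj (α k)
    push_cast at h ⊢
    linear_combination -h
  rw [e1, e2, ← Complex.ofReal_mul, inv_mul_cancel₀ hx.ne']
  simp

lemma rho_mul (α : ℕ → ℂ) (k : ℕ) (h1 : ‖α k‖ < 1) :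
    cmvRho α k * cmvRho α k = 1 - α k * (starRingEnd ℂ) (α k) := by
  have hy : (0:ℝ) ≤ 1 - ‖α k‖^2 := by
    nlinarith [norm_nonneg (α k)]
  unfold cmvRho
  rw [← Complex.ofReal_mul, Real.mul_self_sqrt hy, Complex.mul_conj, ← Complex.sq_norm]
  push_cast
  ring

lemma conj_psi (α : ℕ → ℂ) (k : ℕ) : (starRingEnd ℂ) (psiConst α k) = psiConst α k :=
  Complex.conj_ofReal _

lemma conj_rho (α : ℕ → ℂ) (k : ℕ) : (starRingEnd ℂ) (cmvRho α k) = cmvRho α k :=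
  Complex.conj_ofReal _


lemma hI : Complex.I * Complex.I = (-1 : ℂ) := Complex.I_mul_I

lemma u11 (C R a : ℂ) (hC : C*C*(2 - a - (starRingEnd ℂ) a) = 1)
    (hR : R*R = 1 - a*(starRingEnd ℂ) a) :
    (C*(-Complex.I*(1-a)))*(C*(Complex.I*(1-(starRingEnd ℂ) a))) + (C*R)*(C*R) = 1 := by
  linear_combination (-(C*C*(1-a)*(1-(starRingEnd ℂ) a)))*hI + (C*C)*hR + hC

lemma u12 (C R a : ℂ) : (C*(-Complex.I*(1-a)))*(C*(-Complex.I*R)) + (C*R)*(C*(1-a)) = 0 := by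
  linear_combination (C*C*(1-a)*R)*hI

lemma u21 (C R a : ℂ) : (C*(Complex.I*R))*(C*(Complex.I*(1-(starRingEnd ℂ) a))) + (C*(1-(starRingEnd ℂ) a))*(C*R) = 0 := by
  linear_combination (C*C*R*(1-(starRingEnd ℂ) a))*hI

lemma u22 (C R a : ℂ) (hC : C*C*(2 - a - (starRingEnd ℂ) a) = 1)
    (hR : R*R = 1 - a*(starRingEnd ℂ) a) : (C*(Complex.I*R))*(C*(-Complex.I*R)) + (C*(1-(starRingEnd ℂ) a))*(C*(1-a)) = 1 := by
  linear_combination (-(C*C*R*R))*hI + (C*C)*hR + hC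

lemma v11 (C R a : ℂ) (hC : C*C*(2 - a - (starRingEnd ℂ) a) = 1)
    (hR : R*R = 1 - a*(starRingEnd ℂ) a) : (C*(Complex.I*(1-(starRingEnd ℂ) a)))*(C*(-Complex.I*(1-a))) + (C*(-Complex.I*R))*(C*(Complex.I*R)) = 1 := by
  linear_combination (-(C*C*(1-a)*(1-(starRingEnd ℂ) a)) - C*C*R*R)*hI + (C*C)*hR + hC

lemma v12 (C R a : ℂ) (hC : C*C*(2 - a - (starRingEnd ℂ) a) = 1)
    (hR : R*R = 1 - a*(starRingEnd ℂ) a) : (C*(Complex.I*(1-(starRingEnd ℂ) a)))*(C*R) + (C*(-Complex.I*R))*(C*(1-(starRingEnd ℂ) a)) = 0 := by ring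

lemma v21 (C R a : ℂ) : (C*R)*(C*(-Complex.I*(1-a))) + (C*(1-a))*(C*(Complex.I*R)) = 0 := by ring

lemma v22 (C R a : ℂ) (hC : C*C*(2 - a - (starRingEnd ℂ) a) = 1)
    (hR : R*R = 1 - a*(starRingEnd ℂ) a) : (C*R)*(C*R) + (C*(1-a))*(C*(1-(starRingEnd ℂ) a)) = 1 := by
  linear_combination (C*C)*hR + hC

lemma t11 (C R a : ℂ) (hC : C*C*(2 - a - (starRingEnd ℂ) a) = 1)
    (hR : R*R = 1 - a*(starRingEnd ℂ) a) : (C*(Complex.I*(1-(starRingEnd ℂ) a)))*(C*(Complex.I*(1-(starRingEnd ℂ) a))) + (C*R)*(C*R) = (starRingEnd ℂ) a := by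
  linear_combination (C*C*(1-(starRingEnd ℂ) a)*(1-(starRingEnd ℂ) a))*hI + (C*C)*hR + ((starRingEnd ℂ) a)*hC

lemma t12 (C R a : ℂ) (hC : C*C*(2 - a - (starRingEnd ℂ) a) = 1)
    (hR : R*R = 1 - a*(starRingEnd ℂ) a) : (C*(Complex.I*(1-(starRingEnd ℂ) a)))*(C*(-Complex.I*R)) + (C*R)*(C*(1-a)) = R := by
  linear_combination (-(C*C*R*(1-(starRingEnd ℂ) a)))*hI + R*hC

lemma t21 (C R a : ℂ) (hC : C*C*(2 - a - (starRingEnd ℂ) a) = 1)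
    (hR : R*R = 1 - a*(starRingEnd ℂ) a) : (C*(-Complex.I*R))*(C*(Complex.I*(1-(starRingEnd ℂ) a))) + (C*(1-a))*(C*R) = R := by
  linear_combination (-(C*C*R*(1-(starRingEnd ℂ) a)))*hI + R*hC

lemma t22 (C R a : ℂ) (hC : C*C*(2 - a - (starRingEnd ℂ) a) = 1)
    (hR : R*R = 1 - a*(starRingEnd ℂ) a) : (C*(-Complex.I*R))*(C*(-Complex.I*R)) + (C*(1-a))*(C*(1-a)) = -a := by
  linear_combination (C*C*R*R)*hI + (-(C*C))*hR + (-a)*hC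


lemma support_aux {c j : ℕ} (hc1 : c ≠ blk j) (hc2 : c ≠ blk j + 1) : blk c ≠ blk j := by
  intro h; rcases blk_self_or c with hc | hc <;> omega

lemma sum_single' {N : ℕ} (g : Fin N → ℂ) (a : ℕ) (ha : a < N)
    (h : ∀ c : Fin N, (c : ℕ) ≠ a → g c = 0) : ∑ c, g c = g ⟨a, ha⟩ :=
  Fintype.sum_eq_single _ (fun x hx => h x (by simpa [Fin.ext_iff] using hx))

lemma sum_pair' {N : ℕ} (g : Fin N → ℂ) (a : ℕ) (ha : a + 1 < N)
    (h : ∀ c : Fin N, (c : ℕ) ≠ a → (c : ℕ) ≠ a + 1 → g c = 0) :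
    ∑ c, g c = g ⟨a, by omega⟩ + g ⟨a + 1, ha⟩ :=
  Fintype.sum_eq_add _ _ (by simp [Fin.ext_iff])
    (fun x hx => h x (by simpa [Fin.ext_iff] using hx.1) (by simpa [Fin.ext_iff] using hx.2))

lemma colsum1 (n : ℕ) (α : ℕ → ℂ) (h1 : ∀ k, ‖α k‖ < 1)
    (h2 : ∀ k, (α k).re < 1) (j k : Fin (2*n+1)) :
    ∑ l : Fin (2*n+1), (starRingEnd ℂ) (nEntry α l j) * nEntry α l k
      = if j = k then 1 else 0 := by
  by_cases hj : (j : ℕ) = 0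
  · have hsup : ∀ c : Fin (2*n+1), (c : ℕ) ≠ 0 →
        (starRingEnd ℂ) (nEntry α c j) * nEntry α c k = 0 := by
      intro c hc
      rw [nEntry_eq_zero α (j := (c:ℕ)) (k := (j:ℕ))
        (by rw [hj]; exact fun h => hc ((blk_zero_iff _).mp h))]
      simp
    rw [sum_single' _ 0 (by omega) hsup]
    by_cases hk : (k : ℕ) = 0
    · have hjk : j = k := Fin.ext (by omega)
      rw [if_pos hjk]
      show (starRingEnd ℂ) (nEntry α (0:ℕ) (j:ℕ)) * nEntry α (0:ℕ) (k:ℕ) = 1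
      rw [hj, hk, nEntry_zero_zero]; simp
    · have hjk : ¬ j = k := fun h => hk (h ▸ hj)
      rw [if_neg hjk]
      show (starRingEnd ℂ) (nEntry α (0:ℕ) (j:ℕ)) * nEntry α (0:ℕ) (k:ℕ) = 0
      rw [nEntry_eq_zero α (j := 0) (k := (k:ℕ))
        (by rw [show blk 0 = 0 from rfl]; exact fun h => hk ((blk_zero_iff _).mp h.symm)),
        mul_zero]
  · set i := blk (j : ℕ) with hidef
    have hio : Odd i := blk_odd _ hj
    have hi2 : i % 2 = 1 := Nat.odd_iff.mp hio
    have hile : i ≤ (j : ℕ) := blk_le _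
    have hjlt : (j : ℕ) < 2*n+1 := j.isLt
    have hi1 : i + 1 < 2*n+1 := by omega
    have hsup : ∀ c : Fin (2*n+1), (c : ℕ) ≠ i → (c:ℕ) ≠ i + 1 →
        (starRingEnd ℂ) (nEntry α c j) * nEntry α c k = 0 := by
      intro c hc1 hc2
      rw [nEntry_eq_zero α (support_aux hc1 hc2)]; simp
    rw [sum_pair' _ i hi1 hsup]
    have hCa := psi_mul α i (h2 i)
    have hRa := rho_mul α i (h1 i)
    have hj' : (j:ℕ) = i ∨ (j:ℕ) = i + 1 := blk_self_or (j:ℕ)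
    simp only [Fin.val_mk]
    by_cases hbk : blk (k:ℕ) = i
    · have hk' : (k:ℕ) = i ∨ (k:ℕ) = i + 1 := by
        have := blk_self_or (k:ℕ); omega
      rcases hj' with hj' | hj' <;> rcases hk' with hk' | hk'
      · rw [if_pos (Fin.ext (by omega) : j = k), hj', hk',
          nEntry_e1 α hio, nEntry_e3 α hio]
        simp only [_root_.map_mul, _root_.map_sub, _root_.map_one, _root_.map_neg, Complex.conj_conj,
          Complex.conj_I, conj_psi, conj_rho]
        linear_combination u11 (psiConst α i) (cmvRho α i) (α i) hCa hRa
      · rw [if_neg (by intro h; rw [h] at hj'; omega : ¬ j = k), hj', hk',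
          nEntry_e1 α hio, nEntry_e2 α hio, nEntry_e3 α hio, nEntry_e4 α hio]
        simp only [_root_.map_mul, _root_.map_sub, _root_.map_one, _root_.map_neg, Complex.conj_conj,
          Complex.conj_I, conj_psi, conj_rho]
        linear_combination u12 (psiConst α i) (cmvRho α i) (α i)
      · rw [if_neg (by intro h; rw [h] at hj'; omega : ¬ j = k), hj', hk',
          nEntry_e1 α hio, nEntry_e2 α hio, nEntry_e3 α hio, nEntry_e4 α hio]
        simp only [_root_.map_mul, _root_.map_sub, _root_.map_one, _root_.map_neg, Complex.conj_conj,
          Complex.conj_I, conj_psi, conj_rho]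
        linear_combination u21 (psiConst α i) (cmvRho α i) (α i)
      · rw [if_pos (Fin.ext (by omega) : j = k), hj', hk',
          nEntry_e2 α hio, nEntry_e4 α hio]
        simp only [_root_.map_mul, _root_.map_sub, _root_.map_one, _root_.map_neg, Complex.conj_conj,
          Complex.conj_I, conj_psi, conj_rho]
        linear_combination u22 (psiConst α i) (cmvRho α i) (α i) hCa hRa
    · have hz1 : nEntry α i (k:ℕ) = 0 :=
        nEntry_eq_zero α (by rw [blk_odd_self hio]; exact fun h => hbk h.symm)
      have hz2 : nEntry α (i+1) (k:ℕ) = 0 :=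
        nEntry_eq_zero α (by rw [blk_odd_succ hio]; exact fun h => hbk h.symm)
      have hne : ¬ j = k := by
        intro h; apply hbk; rw [← h, ← hidef]
      rw [if_neg hne, hz1, hz2]; simp

lemma rowsum2 (n : ℕ) (α : ℕ → ℂ) (h1 : ∀ k, ‖α k‖ < 1)
    (h2 : ∀ k, (α k).re < 1) (j k : Fin (2*n+1)) :
    ∑ l : Fin (2*n+1), nEntry α j l * (starRingEnd ℂ) (nEntry α k l)
      = if j = k then 1 else 0 := by
  by_cases hj : (j : ℕ) = 0
  · have hsup : ∀ c : Fin (2*n+1), (c : ℕ) ≠ 0 →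
        nEntry α j c * (starRingEnd ℂ) (nEntry α k c) = 0 := by
      intro c hc
      rw [nEntry_eq_zero α (j := (j:ℕ)) (k := (c:ℕ))
        (by rw [hj]; exact fun h => hc ((blk_zero_iff _).mp h.symm)), zero_mul]
    rw [sum_single' _ 0 (by omega) hsup]
    by_cases hk : (k : ℕ) = 0
    · have hjk : j = k := Fin.ext (by omega)
      rw [if_pos hjk]
      show nEntry α (j:ℕ) (0:ℕ) * (starRingEnd ℂ) (nEntry α (k:ℕ) (0:ℕ)) = 1
      rw [hj, hk, nEntry_zero_zero]; simp
    · have hjk : ¬ j = k := fun h => hk (h ▸ hj)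
      rw [if_neg hjk]
      show nEntry α (j:ℕ) (0:ℕ) * (starRingEnd ℂ) (nEntry α (k:ℕ) (0:ℕ)) = 0
      rw [nEntry_eq_zero α (j := (k:ℕ)) (k := 0)
        (fun h => hk ((blk_zero_iff _).mp h))]
      simp
  · set i := blk (j : ℕ) with hidef
    have hio : Odd i := blk_odd _ hj
    have hi2 : i % 2 = 1 := Nat.odd_iff.mp hio
    have hile : i ≤ (j : ℕ) := blk_le _
    have hjlt : (j : ℕ) < 2*n+1 := j.isLt
    have hi1 : i + 1 < 2*n+1 := by omega
    have hsup : ∀ c : Fin (2*n+1), (c : ℕ) ≠ i → (c:ℕ) ≠ i + 1 →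
        nEntry α j c * (starRingEnd ℂ) (nEntry α k c) = 0 := by
      intro c hc1 hc2
      rw [nEntry_eq_zero α (support_aux hc1 hc2).symm, zero_mul]
    rw [sum_pair' _ i hi1 hsup]
    have hCa := psi_mul α i (h2 i)
    have hRa := rho_mul α i (h1 i)
    have hj' : (j:ℕ) = i ∨ (j:ℕ) = i + 1 := blk_self_or (j:ℕ)
    simp only [Fin.val_mk]
    by_cases hbk : blk (k:ℕ) = i
    · have hk' : (k:ℕ) = i ∨ (k:ℕ) = i + 1 := by
        have := blk_self_or (k:ℕ); omega
      rcases hj' with hj' | hj' <;> rcases hk' with hk' | hk'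
      · rw [if_pos (Fin.ext (by omega) : j = k), hj', hk',
          nEntry_e1 α hio, nEntry_e2 α hio]
        simp only [_root_.map_mul, _root_.map_sub, _root_.map_one, _root_.map_neg,
          Complex.conj_conj, Complex.conj_I, conj_psi, conj_rho]
        linear_combination v11 (psiConst α i) (cmvRho α i) (α i) hCa hRa
      · rw [if_neg (by intro h; rw [h] at hj'; omega : ¬ j = k), hj', hk',
          nEntry_e1 α hio, nEntry_e2 α hio, nEntry_e3 α hio, nEntry_e4 α hio]
        simp only [_root_.map_mul, _root_.map_sub, _root_.map_one, _root_.map_neg,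
          Complex.conj_conj, Complex.conj_I, conj_psi, conj_rho]
        linear_combination v12 (psiConst α i) (cmvRho α i) (α i) hCa hRa
      · rw [if_neg (by intro h; rw [h] at hj'; omega : ¬ j = k), hj', hk',
          nEntry_e1 α hio, nEntry_e2 α hio, nEntry_e3 α hio, nEntry_e4 α hio]
        simp only [_root_.map_mul, _root_.map_sub, _root_.map_one, _root_.map_neg,
          Complex.conj_conj, Complex.conj_I, conj_psi, conj_rho]
        linear_combination v21 (psiConst α i) (cmvRho α i) (α i)
      · rw [if_pos (Fin.ext (by omega) : j = k), hj', hk',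
          nEntry_e3 α hio, nEntry_e4 α hio]
        simp only [_root_.map_mul, _root_.map_sub, _root_.map_one, _root_.map_neg,
          Complex.conj_conj, Complex.conj_I, conj_psi, conj_rho]
        linear_combination v22 (psiConst α i) (cmvRho α i) (α i) hCa hRa
    · have hz1 : nEntry α (k:ℕ) i = 0 :=
        nEntry_eq_zero α (by rw [blk_odd_self hio]; exact hbk)
      have hz2 : nEntry α (k:ℕ) (i+1) = 0 :=
        nEntry_eq_zero α (by rw [blk_odd_succ hio]; exact hbk)
      have hne : ¬ j = k := by
        intro h; apply hbk; rw [← h, ← hidef]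
      rw [if_neg hne, hz1, hz2]; simp

lemma colsum3 (n : ℕ) (α : ℕ → ℂ) (h1 : ∀ k, ‖α k‖ < 1)
    (h2 : ∀ k, (α k).re < 1) (j k : Fin (2*n+1)) :
    ∑ l : Fin (2*n+1), nEntry α l j * nEntry α l k = mEntry α j k := by
  by_cases hj : (j : ℕ) = 0
  · have hsup : ∀ c : Fin (2*n+1), (c : ℕ) ≠ 0 →
        nEntry α c j * nEntry α c k = 0 := by
      intro c hc
      rw [nEntry_eq_zero α (j := (c:ℕ)) (k := (j:ℕ))
        (by rw [hj]; exact fun h => hc ((blk_zero_iff _).mp h)), zero_mul]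
    rw [sum_single' _ 0 (by omega) hsup]
    by_cases hk : (k : ℕ) = 0
    · show nEntry α (0:ℕ) (j:ℕ) * nEntry α (0:ℕ) (k:ℕ) = mEntry α (j:ℕ) (k:ℕ)
      rw [hj, hk, nEntry_zero_zero]
      simp [mEntry]
    · show nEntry α (0:ℕ) (j:ℕ) * nEntry α (0:ℕ) (k:ℕ) = mEntry α (j:ℕ) (k:ℕ)
      have hb : blk 0 ≠ blk (k:ℕ) := fun h => hk ((blk_zero_iff _).mp h.symm)
      rw [hj, nEntry_eq_zero α hb, mul_zero, mEntry_eq_zero α hb]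
  · set i := blk (j : ℕ) with hidef
    have hio : Odd i := blk_odd _ hj
    have hi2 : i % 2 = 1 := Nat.odd_iff.mp hio
    have hile : i ≤ (j : ℕ) := blk_le _
    have hjlt : (j : ℕ) < 2*n+1 := j.isLt
    have hi1 : i + 1 < 2*n+1 := by omega
    have hsup : ∀ c : Fin (2*n+1), (c : ℕ) ≠ i → (c:ℕ) ≠ i + 1 →
        nEntry α c j * nEntry α c k = 0 := by
      intro c hc1 hc2
      rw [nEntry_eq_zero α (support_aux hc1 hc2), zero_mul]
    rw [sum_pair' _ i hi1 hsup]
    have hCa := psi_mul α i (h2 i)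
    have hRa := rho_mul α i (h1 i)
    have hj' : (j:ℕ) = i ∨ (j:ℕ) = i + 1 := blk_self_or (j:ℕ)
    simp only [Fin.val_mk]
    by_cases hbk : blk (k:ℕ) = i
    · have hk' : (k:ℕ) = i ∨ (k:ℕ) = i + 1 := by
        have := blk_self_or (k:ℕ); omega
      rcases hj' with hj' | hj' <;> rcases hk' with hk' | hk'
      · rw [hj', hk', nEntry_e1 α hio, nEntry_e3 α hio, mEntry_e1 α hio]
        linear_combination t11 (psiConst α i) (cmvRho α i) (α i) hCa hRa
      · rw [hj', hk', nEntry_e1 α hio, nEntry_e2 α hio, nEntry_e3 α hio, nEntry_e4 α hio,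
          mEntry_e2 α hio]
        linear_combination t12 (psiConst α i) (cmvRho α i) (α i) hCa hRa
      · rw [hj', hk', nEntry_e1 α hio, nEntry_e2 α hio, nEntry_e3 α hio, nEntry_e4 α hio,
          mEntry_e3 α hio]
        linear_combination t21 (psiConst α i) (cmvRho α i) (α i) hCa hRa
      · rw [hj', hk', nEntry_e2 α hio, nEntry_e4 α hio, mEntry_e4 α hio]
        linear_combination t22 (psiConst α i) (cmvRho α i) (α i) hCa hRa
    · have hz1 : nEntry α i (k:ℕ) = 0 :=
        nEntry_eq_zero α (by rw [blk_odd_self hio]; exact fun h => hbk h.symm)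
      have hz2 : nEntry α (i+1) (k:ℕ) = 0 :=
        nEntry_eq_zero α (by rw [blk_odd_succ hio]; exact fun h => hbk h.symm)
      have hm : mEntry α (j:ℕ) (k:ℕ) = 0 :=
        mEntry_eq_zero α (by rw [← hidef]; exact fun h => hbk h.symm)
      rw [hm, hz1, hz2]; simp

/-- the block-diagonal matrix `N = diag([1], Ψ_1, Ψ_3, …)` is unitary
and satisfies `Nᵀ N = M = diag([1], Ξ_1, Ξ_3, …)`, for `α_k ∈ 𝔻` with `Re α_k < 1`. -/
theorem n_unitary_and_transpose_mul (n : ℕ) (α : ℕ → ℂ)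
    (h1 : ∀ k, ‖α k‖ < 1) (h2 : ∀ k, (α k).re < 1) :
    (Matrix.of fun j k : Fin (2 * n + 1) => nEntry α j k)ᴴ *
        (Matrix.of fun j k : Fin (2 * n + 1) => nEntry α j k) = 1 ∧
      (Matrix.of fun j k : Fin (2 * n + 1) => nEntry α j k) *
        (Matrix.of fun j k : Fin (2 * n + 1) => nEntry α j k)ᴴ = 1 ∧
      (Matrix.of fun j k : Fin (2 * n + 1) => nEntry α j k)ᵀ *
        (Matrix.of fun j k : Fin (2 * n + 1) => nEntry α j k) =
        (Matrix.of fun j k : Fin (2 * n + 1) => mEntry α j k) := by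
  refine ⟨?_, ?_, ?_⟩
  · ext j k
    simp only [Matrix.mul_apply, Matrix.conjTranspose_apply, Matrix.of_apply,
      Matrix.one_apply, Complex.star_def]
    exact colsum1 n α h1 h2 j k
  · ext j k
    simp only [Matrix.mul_apply, Matrix.conjTranspose_apply, Matrix.of_apply,
      Matrix.one_apply, Complex.star_def]
    exact rowsum2 n α h1 h2 j k
  · ext j k
    simp only [Matrix.mul_apply, Matrix.transpose_apply, Matrix.of_apply]
    exact colsum3 n α h1 h2 j k
end
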